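/- arXiv:1701.07206 — 8 statements merged into one kernel-verified Lean document; each statement's English description precedes it below -/
import Mathlib

section
/- Let q be a prime power, s ≥ 2, and d an integer with 0 ≤ d ≤ q−1. Let P, Q ∈ 𝔽_q[x_1,…,x_s] be homogeneous polynomials of degree d, and let A_1,…,A_{s−1} ⊆ 𝔽_q be subsets with |A_i| = d+1 for each i. If P(a) = Q(a) for every point a in the set A = A_1 × ⋯ × A_{s−1} × {1}, then P(w) = Q(w) for every w ∈ 𝔽_q^s; that is, A is an interpolation set for homogeneous polynomials of degree d. -/
/-!
Put `R = P - Q`, a homogeneous polynomial of degree `d`. Setting the last variable to `1`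
turns `R` into a polynomial of degree at most `d` in each of the other variables which vanishes on
the grid `A_1 × ⋯ × A_{s-1} × {1}`, so it is zero by the combinatorial Nullstellensatz. A
homogeneous polynomial is recovered from its dehomogenization, since erasing one exponent is
injective on the monomials of fixed total degree; hence `R = 0`.
-/

open MvPolynomial

theorem Finsupp.injOn_erase_of_degree_eq {σ : Type*} (i : σ) (d : ℕ) :
    Set.InjOn (Finsupp.erase i) {n : σ →₀ ℕ | n.degree = d} := by
  intro m (hm : m.degree = d) n (hn : n.degree = d) h
  have degree_eq : ∀ k : σ →₀ ℕ, k.degree = k i + (k.erase i).degree := fun k => by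
    conv_lhs => rw [← Finsupp.single_add_erase i k]
    rw [map_add, Finsupp.degree_single]
  have hmi : m i = n i := by
    have hm' := degree_eq m
    have hn' := degree_eq n
    rw [h] at hm'
    omega
  rw [← Finsupp.single_add_erase i m, ← Finsupp.single_add_erase i n, h, hmi]

namespace MvPolynomial

variable {σ R : Type*}

section CommSemiring

variable [CommSemiring R]

theorem IsHomogeneous.degree_eq_of_mem_support {φ : MvPolynomial σ R} {d : ℕ}
    (hφ : φ.IsHomogeneous d) {n : σ →₀ ℕ} (hn : n ∈ φ.support) : n.degree = d := by
  rw [Finsupp.degree_eq_weight_one]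
  exact hφ (mem_support_iff.mp hn)

variable [DecidableEq σ]

noncomputable def dehomogenize (i : σ) : MvPolynomial σ R →ₐ[R] MvPolynomial σ R :=
  bind₁ (Function.update X i 1)

theorem eval_dehomogenize (i : σ) (x : σ → R) (φ : MvPolynomial σ R) :
    eval x (dehomogenize i φ) = eval (Function.update x i 1) φ := by
  calc eval x (dehomogenize i φ) = eval (fun j => eval x (Function.update X i 1 j)) φ :=
        eval₂Hom_bind₁ _ _ _ _
    _ = eval (Function.update x i 1) φ := by
        congr 2
        funext j
        rcases eq_or_ne j i with rfl | hj <;> simp [*]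

theorem dehomogenize_monomial (i : σ) (n : σ →₀ ℕ) (r : R) :
    dehomogenize i (monomial n r) = monomial (n.erase i) r := by
  have hi : Function.update X i (1 : MvPolynomial σ R) i ^ n i = 1 := by simp
  rw [dehomogenize, bind₁_monomial, monomial_eq, Finsupp.prod, Finsupp.support_erase,
    ← Finset.prod_erase n.support hi]
  congr 1
  refine Finset.prod_congr rfl fun j hj => ?_
  have hji := Finset.ne_of_mem_erase hj
  rw [Function.update_of_ne hji, Finsupp.erase_ne hji]

theorem exists_erase_eq_of_mem_support_dehomogenize {i : σ} {φ : MvPolynomial σ R}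
    {m : σ →₀ ℕ} (hm : m ∈ (dehomogenize i φ).support) : ∃ n ∈ φ.support, n.erase i = m := by
  rw [mem_support_iff, φ.as_sum, map_sum, coeff_sum] at hm
  obtain ⟨n, hn, hcoeff⟩ := Finset.exists_ne_zero_of_sum_ne_zero hm
  rw [dehomogenize_monomial, coeff_monomial] at hcoeff
  exact ⟨n, hn, by_contra fun h => hcoeff (if_neg h)⟩

theorem degreeOf_dehomogenize_self (i : σ) (φ : MvPolynomial σ R) :
    degreeOf i (dehomogenize i φ) = 0 := by
  rw [← Nat.le_zero, degreeOf_le_iff]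
  intro m hm
  obtain ⟨n, -, rfl⟩ := exists_erase_eq_of_mem_support_dehomogenize hm
  simp

theorem IsHomogeneous.degreeOf_dehomogenize_le {φ : MvPolynomial σ R} {d : ℕ}
    (hφ : φ.IsHomogeneous d) (i j : σ) : degreeOf j (dehomogenize i φ) ≤ d := by
  rw [degreeOf_le_iff]
  intro m hm
  obtain ⟨n, hn, rfl⟩ := exists_erase_eq_of_mem_support_dehomogenize hm
  calc (n.erase i) j ≤ n j := by rw [Finsupp.erase_apply]; split_ifs <;> simp
    _ ≤ n.degree := Finsupp.le_degree j n
    _ = d := hφ.degree_eq_of_mem_support hn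

theorem IsHomogeneous.coeff_erase_dehomogenize {φ : MvPolynomial σ R} {d : ℕ}
    (hφ : φ.IsHomogeneous d) (i : σ) {n : σ →₀ ℕ} (hn : n.degree = d) :
    coeff (n.erase i) (dehomogenize i φ) = coeff n φ := by
  conv_lhs => rw [φ.as_sum]
  rw [map_sum, coeff_sum, Finset.sum_eq_single n]
  · rw [dehomogenize_monomial, coeff_monomial, if_pos rfl]
  · intro m hm hmn
    rw [dehomogenize_monomial, coeff_monomial, if_neg]
    exact fun h => hmn (Finsupp.injOn_erase_of_degree_eq i d (hφ.degree_eq_of_mem_support hm) hn h)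
  · intro hn'
    rw [notMem_support_iff.mp hn', monomial_zero, map_zero, coeff_zero]

theorem IsHomogeneous.eq_zero_of_dehomogenize_eq_zero {φ : MvPolynomial σ R} {d : ℕ}
    (hφ : φ.IsHomogeneous d) (i : σ) (h : dehomogenize i φ = 0) : φ = 0 := by
  ext n
  by_cases hn : n.degree = d
  · rw [← hφ.coeff_erase_dehomogenize i hn, h, coeff_zero, coeff_zero]
  · exact hφ.coeff_eq_zero hn

end CommSemiring

variable [DecidableEq σ] [Finite σ] [CommRing R] [IsDomain R]

theorem IsHomogeneous.eq_zero_of_eval_eq_zero_on_grid {φ : MvPolynomial σ R} {d : ℕ}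
    (hφ : φ.IsHomogeneous d) (i : σ) (S : σ → Finset R) (hS : ∀ j ≠ i, d < (S j).card)
    (hzero : ∀ x : σ → R, (∀ j ≠ i, x j ∈ S j) → x i = 1 → eval x φ = 0) : φ = 0 := by
  refine hφ.eq_zero_of_dehomogenize_eq_zero i <|
    eq_zero_of_eval_zero_at_prod_finset _ (Function.update S i {1}) (fun j => ?_) (fun x hx => ?_)
  · rcases eq_or_ne j i with rfl | hj
    · simp [degreeOf_dehomogenize_self]
    · rw [Function.update_of_ne hj]
      exact (hφ.degreeOf_dehomogenize_le i j).trans_lt (hS j hj)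
  · have hxi : x i = 1 := by simpa using hx i
    rw [eval_dehomogenize, ← hxi, Function.update_eq_self]
    exact hzero x (fun j hj => by simpa [hj] using hx j) hxi

end MvPolynomial

theorem stmt0 {F : Type*} [Field F] (s d : ℕ)
    (hs : 2 ≤ s)
    (P Q : MvPolynomial (Fin s) F)
    (hP : P.IsHomogeneous d) (hQ : Q.IsHomogeneous d)
    (A : Fin s → Finset F) (hA : ∀ i : Fin s, (i : ℕ) < s - 1 → (A i).card = d + 1)
    (hagree : ∀ a : Fin s → F,
      (∀ i : Fin s, (i : ℕ) < s - 1 → a i ∈ A i) →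
      a ⟨s - 1, by omega⟩ = 1 →
      eval a P = eval a Q) :
    ∀ w : Fin s → F, eval w P = eval w Q := by
  have hlt : ∀ j : Fin s, j ≠ ⟨s - 1, by omega⟩ → (j : ℕ) < s - 1 := fun j hj => by
    have : (j : ℕ) ≠ s - 1 := fun h => hj (Fin.ext h)
    omega
  have hPQ : P - Q = 0 := by
    refine (hP.sub hQ).eq_zero_of_eval_eq_zero_on_grid ⟨s - 1, by omega⟩ A
      (fun j hj => ?_) fun x hx hx1 => ?_
    · rw [hA j (hlt j hj)]
      exact d.lt_succ_self
    · rw [map_sub, sub_eq_zero]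
      exact hagree x (fun j hj => hx j (Fin.ne_of_val_ne (Nat.ne_of_lt hj))) hx1
  intro w
  rw [sub_eq_zero.mp hPQ]
end

section
/- Let q be a prime power and m, d, s positive integers with s ≥ 2 and d < m(q−1), and set k = ⌊q/m⌋^{s−1}. Then for every w_0 ∈ 𝔽_q^s there exist k pairwise disjoint subsets R_1,…,R_k of 𝔽_q^s ∖ {w_0} such that for each j ∈ {1,…,k}, any two polynomials P, Q ∈ 𝔽_q[x_1,…,x_s] of total degree at most d satisfying P^{(<m)}(w) = Q^{(<m)}(w) for every w ∈ R_j also satisfy P^{(<m)}(w_0) = Q^{(<m)}(w_0). (That is, every coordinate of the multiplicity code C(m,d,s,q) has k mutually disjoint recovering sets, so C(m,d,s,q) is a k-PIR code.) -/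
open MvPolynomial

/-- The `i`-th Hasse derivative of a multivariate polynomial `P`, i.e. the coefficient of
`z^i` in the expansion of `P(x + z)`. -/
noncomputable def hasseDeriv {F : Type*} [Field F] {s : ℕ}
    (i : Fin s →₀ ℕ) (P : MvPolynomial (Fin s) F) : MvPolynomial (Fin s) F :=
  ∑ m ∈ P.support,
    monomial (m - i) ((∏ j : Fin s, ((m j).choose (i j) : F)) * P.coeff m)

/-!
Split `F` into `⌊q/m⌋` disjoint blocks of size `m`. A choice of blocks `B₁, …, B_{s-1}` gives a
grid `U = B₁ × ⋯ × B_{s-1}`, and the recovering set is the union of the lines through `w₀` in the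
directions `(1, u)`, `u ∈ U`, with `w₀` removed; distinct grids give disjoint sets.

If `D = P - Q` vanishes to order `m` on such a set, then its restriction `T ↦ D(w₀ + T (1, u))`
has a root of multiplicity `m` at each of the `q - 1` nonzero `T`, and degree `≤ d < m (q - 1)`,
so it is zero. Its coefficient of `T^k` is the degree-`k` part of the Taylor expansion of `D` at
`w₀` evaluated at `(1, u)`. For `k < m` this homogeneous polynomial therefore vanishes on
`{1} × U`, whose sides have `m > k` elements, so it is zero by the combinatorial
Nullstellensatz: all Hasse derivatives of `D` of order `< m` vanish at `w₀`.
-/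

lemma Finsupp.eq_of_tail_eq_of_degree_eq {n : ℕ} {i i' : Fin (n + 1) →₀ ℕ}
    (htail : tail i = tail i') (hdeg : i.degree = i'.degree) : i = i' := by
  rw [← cons_tail i, ← cons_tail i', htail]
  congr 1
  simp only [degree_eq_sum, Fin.sum_univ_succ, ← tail_apply, htail] at hdeg
  omega

lemma Finset.exists_pairwise_disjoint_card_eq {α : Type*} [Fintype α] {b m : ℕ}
    (h : b * m ≤ Fintype.card α) :
    ∃ B : Fin b → Finset α, (∀ a, (B a).card = m) ∧ Pairwise (Function.onFun Disjoint B) := by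
  obtain ⟨ι⟩ := Function.Embedding.nonempty_of_card_le (α := Fin b × Fin m) (β := α)
    (by simpa using h)
  refine ⟨fun a => univ.map ((Function.Embedding.sectR a (Fin m)).trans ι), fun a => ?_,
    fun a a' hne => ?_⟩
  · simp
  · simp only [Function.onFun, disjoint_left, mem_map, mem_univ, true_and, not_exists]
    rintro _ ⟨t, rfl⟩ t' h
    exact hne (congrArg Prod.fst (ι.injective h)).symm

lemma Polynomial.eq_zero_of_forall_X_sub_C_pow_dvd {K : Type*} [Field K] {m : ℕ}
    {p : Polynomial K} (S : Finset K) (hdvd : ∀ t ∈ S, (X - C t) ^ m ∣ p)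
    (hdeg : p.natDegree < m * S.card) : p = 0 := by
  by_contra hp
  have hprod : (∏ t ∈ S, (X - C t) ^ m) ∣ p :=
    Finset.prod_dvd_of_coprime
      (fun a _ b _ hab => (pairwise_coprime_X_sub_C Function.injective_id hab).pow) hdvd
  have := natDegree_le_of_dvd hprod hp
  rw [natDegree_prod _ _ fun t _ => pow_ne_zero _ (X_sub_C_ne_zero t)] at this
  simp only [natDegree_pow, natDegree_X_sub_C, mul_one, Finset.sum_const, smul_eq_mul] at this
  rw [mul_comm] at hdeg
  omega

namespace MvPolynomial

section Homogeneous

variable {R : Type*} [CommRing R] [IsDomain R] {n k : ℕ}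

/-- Dehomogenizing at the first variable is injective on homogeneous polynomials of degree `k`,
and the dehomogenization has degree `≤ k` in each variable, so the combinatorial
Nullstellensatz applies to it. -/
theorem IsHomogeneous.eq_zero_of_eval_cons_one_eq_zero {H : MvPolynomial (Fin (n + 1)) R}
    (hH : H.IsHomogeneous k) (S : Fin n → Finset R) (hS : ∀ j, k < (S j).card)
    (hvan : ∀ u : Fin n → R, (∀ j, u j ∈ S j) → eval (Fin.cons 1 u) H = 0) : H = 0 := by
  have hdeg : ∀ i ∈ H.support, i.degree = k := fun i hi =>
    by_contra fun h => mem_support_iff.mp hi (hH.coeff_eq_zero h)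
  set H' : MvPolynomial (Fin n) R := ∑ i ∈ H.support, monomial (Finsupp.tail i) (coeff i H)
  have heval : ∀ u, eval u H' = eval (Fin.cons 1 u) H := fun u => by
    rw [eval_eq' _ H]
    simp only [H', map_sum, eval_monomial, Finsupp.prod_fintype _ _ (fun j => pow_zero _),
      Fin.prod_univ_succ, Fin.cons_zero, one_pow, one_mul, Fin.cons_succ, Finsupp.tail_apply]
  have hdegOf : ∀ j, degreeOf j H' < (S j).card := fun j => by
    rw [degreeOf_lt_iff (Nat.zero_lt_of_lt (hS j))]
    intro d hd
    obtain ⟨i, hi, hd⟩ := Finset.mem_biUnion.mp (support_sum hd)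
    rw [Finset.mem_singleton.mp (support_monomial_subset hd), Finsupp.tail_apply]
    exact ((Finsupp.le_degree _ i).trans (hdeg i hi).le).trans_lt (hS j)
  have hH' : H' = 0 := eq_zero_of_eval_zero_at_prod_finset H' S hdegOf
    fun u hu => (heval u).trans (hvan u hu)
  ext i
  by_contra hi
  have hcoeff : coeff (Finsupp.tail i) H' = coeff i H := by
    simp only [H', coeff_sum, coeff_monomial]
    rw [Finset.sum_eq_single_of_mem i (mem_support_iff.mpr hi), if_pos rfl]
    intro i' hi' hne
    rw [if_neg fun h => hne (Finsupp.eq_of_tail_eq_of_degree_eq h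
      ((hdeg i' hi').trans (hdeg i (mem_support_iff.mpr hi)).symm))]
  rw [← hcoeff, hH', coeff_zero] at hi
  exact hi rfl

end Homogeneous

section Taylor

variable {R σ : Type*} [CommRing R]

noncomputable def taylor (x : σ → R) : MvPolynomial σ R →ₐ[R] MvPolynomial σ R :=
  aeval fun j => X j + C (x j)

noncomputable def lineRestriction (x v : σ → R) : MvPolynomial σ R →ₐ[R] Polynomial R :=
  aeval fun j => Polynomial.C (v j) * Polynomial.X + Polynomial.C (x j)

theorem taylor_monomial [Fintype σ] [DecidableEq σ] (x : σ → R) (n : σ →₀ ℕ) (c : R) :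
    taylor x (monomial n c) = ∑ κ ∈ Fintype.piFinset fun j => Finset.range (n j + 1),
      monomial (Finsupp.equivFunOnFinite.symm κ)
        (c * ∏ j, x j ^ (n j - κ j) * (n j).choose (κ j)) := by
  rw [taylor, aeval_monomial, Finsupp.prod_fintype _ _ (fun j => pow_zero _)]
  simp only [add_pow, Finset.prod_univ_sum, Finset.mul_sum]
  refine Finset.sum_congr rfl fun κ _ => ?_
  rw [monomial_eq, Finsupp.prod_fintype _ _ (fun j => pow_zero _)]
  simp only [map_mul, map_prod, map_pow, map_natCast, Finset.prod_mul_distrib, algebraMap_eq,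
    Finsupp.coe_equivFunOnFinite_symm]
  ring

theorem coeff_taylor_monomial [Fintype σ] (x : σ → R) (n i : σ →₀ ℕ) (c : R) :
    coeff i (taylor x (monomial n c)) = c * ∏ j, x j ^ (n j - i j) * (n j).choose (i j) := by
  classical
  simp only [taylor_monomial, coeff_sum, coeff_monomial, Equiv.symm_apply_eq,
    Finsupp.equivFunOnFinite_apply, Finset.sum_ite_eq', Fintype.mem_piFinset, Finset.mem_range,
    Nat.lt_succ_iff]
  split_ifs with hi
  · rfl
  · obtain ⟨j, hj⟩ := not_forall.mp hi
    rw [Finset.prod_eq_zero (Finset.mem_univ j) (by simp [Nat.choose_eq_zero_of_lt (not_le.mp hj)]),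
      mul_zero]

theorem coeff_aeval_C_mul_X (v : σ → R) (G : MvPolynomial σ R) (k : ℕ) :
    (aeval (fun j => Polynomial.C (v j) * Polynomial.X) G).coeff k
      = eval v (homogeneousComponent k G) := by
  induction G using MvPolynomial.induction_on' with
  | monomial i c =>
    rw [homogeneousComponent_of_mem (isHomogeneous_monomial c rfl), aeval_monomial]
    simp only [Finsupp.prod, mul_pow, Finset.prod_mul_distrib, Finset.prod_pow_eq_pow_sum]
    simp only [← Finsupp.degree_apply, ← Polynomial.C_pow, ← map_prod, Polynomial.algebraMap_eq,
      ← mul_assoc, ← map_mul, Polynomial.coeff_C_mul_X_pow]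
    split_ifs <;> simp [eval_monomial, Finsupp.prod]
  | add G H hG hH => simp only [map_add, Polynomial.coeff_add, hG, hH]

theorem lineRestriction_eq_aeval_taylor (x v : σ → R) (P : MvPolynomial σ R) :
    lineRestriction x v P = aeval (fun j => Polynomial.C (v j) * Polynomial.X) (taylor x P) := by
  rw [taylor, comp_aeval_apply, lineRestriction]
  congr 2
  funext j
  simp only [map_add, aeval_X, aeval_C, Polynomial.algebraMap_eq]

theorem coeff_lineRestriction (x v : σ → R) (P : MvPolynomial σ R) (k : ℕ) :
    (lineRestriction x v P).coeff k = eval v (homogeneousComponent k (taylor x P)) := by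
  rw [lineRestriction_eq_aeval_taylor, coeff_aeval_C_mul_X]

theorem lineRestriction_comp (x v : σ → R) (t : R) (P : MvPolynomial σ R) :
    (lineRestriction (x + t • v) v P).comp (Polynomial.X - Polynomial.C t)
      = lineRestriction x v P := by
  rw [Polynomial.comp_eq_aeval, lineRestriction, comp_aeval_apply, lineRestriction]
  congr 2
  funext j
  simp only [Pi.add_apply, Pi.smul_apply, smul_eq_mul, map_add, map_mul, Polynomial.aeval_C,
    Polynomial.aeval_X, Polynomial.algebraMap_eq]
  ring

theorem natDegree_lineRestriction_le (x v : σ → R) (P : MvPolynomial σ R) :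
    (lineRestriction x v P).natDegree ≤ P.totalDegree := by
  conv_lhs => rw [P.as_sum]
  rw [map_sum]
  refine Polynomial.natDegree_sum_le_of_forall_le _ _ fun n hn => ?_
  rw [lineRestriction, aeval_monomial, Polynomial.algebraMap_eq, Finsupp.prod]
  refine (Polynomial.natDegree_C_mul_le _ _).trans <| (Polynomial.natDegree_prod_le _ _).trans ?_
  refine (Finset.sum_le_sum fun j _ => Polynomial.natDegree_pow_le_of_le (n j)
    (Polynomial.natDegree_linear_le)).trans ?_
  simpa [Finsupp.sum] using le_totalDegree hn

/-- The restriction to the line through `x + t v` is divisible by `X ^ m`, and the restriction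
to the line through `x` is its translate by `t`. -/
theorem X_sub_C_pow_dvd_lineRestriction {x v : σ → R} {t : R} {m : ℕ} {P : MvPolynomial σ R}
    (hP : ∀ i : σ →₀ ℕ, i.degree < m → coeff i (taylor (x + t • v) P) = 0) :
    (Polynomial.X - Polynomial.C t) ^ m ∣ lineRestriction x v P := by
  obtain ⟨r, hr⟩ : Polynomial.X ^ m ∣ lineRestriction (x + t • v) v P := by
    refine Polynomial.X_pow_dvd_iff.mpr fun k hk => ?_
    rw [coeff_lineRestriction, homogeneousComponent_eq_zero' _ _ fun i hi hik =>
      mem_support_iff.mp hi (hP i (hik ▸ hk)), map_zero]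
  rw [← lineRestriction_comp x v t, hr, Polynomial.mul_comp, Polynomial.pow_comp,
    Polynomial.X_comp]
  exact dvd_mul_right _ _

end Taylor

theorem coeff_taylor {F : Type*} [Field F] {s : ℕ} (x : Fin s → F) (i : Fin s →₀ ℕ)
    (P : MvPolynomial (Fin s) F) : coeff i (taylor x P) = eval x (hasseDeriv i P) := by
  conv_lhs => rw [P.as_sum]
  simp only [hasseDeriv, map_sum, coeff_sum, coeff_taylor_monomial, eval_monomial,
    Finsupp.prod_fintype _ _ (fun j => pow_zero _), Finsupp.coe_tsub, Pi.sub_apply]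
  refine Finset.sum_congr rfl fun n _ => ?_
  rw [Finset.prod_mul_distrib]
  ring

end MvPolynomial

section PuncturedLines

variable {F : Type*} [Field F] {n : ℕ}

def puncturedLines (w₀ : Fin (n + 1) → F) (U : Set (Fin n → F)) : Set (Fin (n + 1) → F) :=
  {w | ∃ t ≠ (0 : F), ∃ u ∈ U, w = w₀ + t • Fin.cons 1 u}

theorem self_notMem_puncturedLines (w₀ : Fin (n + 1) → F) (U : Set (Fin n → F)) :
    w₀ ∉ puncturedLines w₀ U := by
  rintro ⟨t, ht, u, -, h⟩
  simpa [ht] using congrFun h 0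

/-- A point of `puncturedLines w₀ U` determines `t` through its first coordinate, hence `u`. -/
theorem disjoint_puncturedLines (w₀ : Fin (n + 1) → F) {U U' : Set (Fin n → F)}
    (h : Disjoint U U') : Disjoint (puncturedLines w₀ U) (puncturedLines w₀ U') := by
  rw [Set.disjoint_left]
  rintro _ ⟨t, ht, u, hu, rfl⟩ ⟨t', -, u', hu', h'⟩
  have htt' : t = t' := by simpa using congrFun h' 0
  subst htt'
  have huu' : u = u' := funext fun j => by simpa [ht] using congrFun h' j.succ
  exact Set.disjoint_left.mp h hu (huu' ▸ hu')

theorem coeff_taylor_eq_zero_of_puncturedLines [Fintype F] {m : ℕ}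
    {P : MvPolynomial (Fin (n + 1)) F} {w₀ : Fin (n + 1) → F} (S : Fin n → Finset F)
    (hS : ∀ j, m ≤ (S j).card) (hdeg : P.totalDegree < m * (Fintype.card F - 1))
    (hvan : ∀ w ∈ puncturedLines w₀ (Set.univ.pi fun j => S j),
      ∀ i : Fin (n + 1) →₀ ℕ, i.degree < m → coeff i (taylor w P) = 0)
    (i : Fin (n + 1) →₀ ℕ) (hi : i.degree < m) : coeff i (taylor w₀ P) = 0 := by
  classical
  have hline : ∀ u : Fin n → F, (∀ j, u j ∈ S j) → lineRestriction w₀ (Fin.cons 1 u) P = 0 := by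
    intro u hu
    refine Polynomial.eq_zero_of_forall_X_sub_C_pow_dvd (Finset.univ.erase 0)
      (fun t ht => X_sub_C_pow_dvd_lineRestriction (hvan _ ⟨t, (Finset.mem_erase.mp ht).1, u,
        Set.mem_univ_pi.mpr hu, rfl⟩)) ?_
    rw [Finset.card_erase_of_mem (Finset.mem_univ 0), Finset.card_univ]
    exact (natDegree_lineRestriction_le _ _ _).trans_lt hdeg
  have hcomp : homogeneousComponent i.degree (taylor w₀ P) = 0 :=
    (homogeneousComponent_isHomogeneous _ _).eq_zero_of_eval_cons_one_eq_zero S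
      (fun j => hi.trans_le (hS j)) fun u hu => by
        rw [← coeff_lineRestriction, hline u hu, Polynomial.coeff_zero]
  simpa [coeff_homogeneousComponent] using congrArg (coeff i) hcomp

end PuncturedLines

theorem stmt3_general {F : Type*} [Field F] [Fintype F] (q m d s : ℕ)
    (hcard : Fintype.card F = q) (hs : 2 ≤ s)
    (hdq : d < m * (q - 1)) :
    ∀ w0 : Fin s → F,
      ∃ R : Fin ((q / m) ^ (s - 1)) → Set (Fin s → F),
        (∀ a b, a ≠ b → Disjoint (R a) (R b)) ∧
        (∀ a, w0 ∉ R a) ∧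
        (∀ a, ∀ P Q : MvPolynomial (Fin s) F, P.totalDegree ≤ d → Q.totalDegree ≤ d →
          (∀ w ∈ R a, ∀ i : Fin s →₀ ℕ, (∑ j : Fin s, i j) < m →
            eval w (hasseDeriv i P) = eval w (hasseDeriv i Q)) →
          ∀ i : Fin s →₀ ℕ, (∑ j : Fin s, i j) < m →
            eval w0 (hasseDeriv i P) = eval w0 (hasseDeriv i Q)) := by
  obtain ⟨n, rfl⟩ : ∃ n, s = n + 1 := ⟨s - 1, by omega⟩
  intro w0
  obtain ⟨B, hBcard, hBdisj⟩ :=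
    Finset.exists_pairwise_disjoint_card_eq (α := F) (b := q / m) (m := m)
      (hcard ▸ Nat.div_mul_le_self q m)
  let ε : Fin ((q / m) ^ n) ≃ (Fin n → Fin (q / m)) := finFunctionFinEquiv.symm
  let grid (a : Fin ((q / m) ^ n)) : Set (Fin n → F) := Set.univ.pi fun j => B (ε a j)
  refine ⟨fun a => puncturedLines w0 (grid a), fun a a' hne => disjoint_puncturedLines w0 ?_,
    fun a => self_notMem_puncturedLines w0 _, fun a P Q hP hQ hPQ i hi => ?_⟩
  · obtain ⟨j, hj⟩ := Function.ne_iff.mp (ε.injective.ne hne)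
    exact Set.disjoint_univ_pi.mpr ⟨j, Finset.disjoint_coe.mpr (hBdisj hj)⟩
  · have htaylor : ∀ w (k : Fin (n + 1) →₀ ℕ), coeff k (taylor w (P - Q)) =
        eval w (hasseDeriv k P) - eval w (hasseDeriv k Q) := fun w k => by
      rw [map_sub, coeff_sub, coeff_taylor, coeff_taylor]
    have hdeg : (P - Q).totalDegree < m * (Fintype.card F - 1) :=
      (totalDegree_sub P Q).trans_lt (hcard ▸ (max_le hP hQ).trans_lt hdq)
    have key := coeff_taylor_eq_zero_of_puncturedLines (fun j => B (ε a j))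
      (fun j => (hBcard _).ge) hdeg (fun w hw k hk => by
        rw [htaylor, hPQ w hw k (by rwa [Finsupp.degree_eq_sum] at hk), sub_self])
      i (by rwa [Finsupp.degree_eq_sum])
    rwa [htaylor, sub_eq_zero] at key

/-- For `s ≥ 2` and `d < m(q-1)`, every coordinate `w₀` of the multiplicity
code `C(m,d,s,q)` has `k = ⌊q/m⌋^(s-1)` pairwise disjoint recovering sets, all avoiding `w₀`;
i.e. `C(m,d,s,q)` is a `k`-PIR code. -/
theorem stmt3 {F : Type*} [Field F] [Fintype F] (q m d s : ℕ)
    (hcard : Fintype.card F = q) (hm : 0 < m) (hd : 0 < d) (hs : 2 ≤ s)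
    (hdq : d < m * (q - 1)) :
    ∀ w0 : Fin s → F,
      ∃ R : Fin ((q / m) ^ (s - 1)) → Set (Fin s → F),
        (∀ a b, a ≠ b → Disjoint (R a) (R b)) ∧
        (∀ a, w0 ∉ R a) ∧
        (∀ a, ∀ P Q : MvPolynomial (Fin s) F, P.totalDegree ≤ d → Q.totalDegree ≤ d →
          (∀ w ∈ R a, ∀ i : Fin s →₀ ℕ, (∑ j : Fin s, i j) < m →
            eval w (hasseDeriv i P) = eval w (hasseDeriv i Q)) →
          ∀ i : Fin s →₀ ℕ, (∑ j : Fin s, i j) < m →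
            eval w0 (hasseDeriv i P) = eval w0 (hasseDeriv i Q)) :=
  stmt3_general q m d s hcard hs hdq
end

section
/- For every real number ε ≥ 1 and every real τ > 0, there exist positive constants c_1, c_2 and an integer n_0 such that for every n ≥ n_0 there exists a binary k-PIR code [N, n, k]^P with k ≥ c_1 · n^ε and length N ≤ c_2 · n^{ε+τ}. -/
/-- There is an `[N,n,k]` PIR code over the field `F`: a systematic injective `F`-linear
encoder `E : F^n → F^N` such that every information coordinate has `k` pairwise disjoint
recovering sets. -/
def ExistsPIRCode (F : Type) [Field F] (N n k : ℕ) : Prop :=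
  ∃ (h : n ≤ N) (E : (Fin n → F) →ₗ[F] (Fin N → F)),
    Function.Injective E ∧
    (∀ (x : Fin n → F) (i : Fin n), E x (Fin.castLE h i) = x i) ∧
    ∀ i : Fin n, ∃ R : Fin k → Finset (Fin N),
      (∀ a b, a ≠ b → Disjoint (R a) (R b)) ∧
      ∀ a, ∀ x x' : Fin n → F, (∀ c ∈ R a, E x c = E x' c) → x i = x' i

/-!
Over `F = 𝔽_q`, `q = 2^t`, the message bits, placed on a grid `S^{m+1}` with `|S| = 2^d`, are interpolated
by the polynomial of degree `< |S|` in each variable that takes these values on the grid; the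
codeword is the message followed by the binary expansions of the values of this polynomial at all
points of `F^{m+1}`. On any line the polynomial restricts to a univariate polynomial of degree at
most `(m+1)(|S|-1) < q - 1`, so its `q - 1` values on a line through a grid point `p`, with `p`
removed, determine its value at `p`. The `q^m` lines through `p` whose direction has first
coordinate `1` meet only at `p`, which gives `k = q^m` disjoint recovering sets, and the length is
at most `q^{m+2}`. Taking `m ≥ 2ε/τ` and `t ≈ ε log₂ n / m` gives `k ≥ n^ε` and
`N = O(n^{ε+τ})`.
-/

open Function Polynomial Finset

section LineDegree

variable {F V : Type*} [Field F] [AddCommGroup V] [Module F V]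

def HasLineDegreeLE (f : V → F) (r : ℕ) : Prop :=
  ∀ p u : V, ∃ U : F[X], U.natDegree ≤ r ∧ ∀ s : F, U.eval s = f (p + s • u)

namespace HasLineDegreeLE

variable {f : V → F} {r : ℕ}

theorem const_mul (c : F) (hf : HasLineDegreeLE f r) : HasLineDegreeLE (fun v ↦ c * f v) r :=
  fun p u ↦
    let ⟨U, hU, hUf⟩ := hf p u
    ⟨C c * U, (natDegree_C_mul_le c U).trans hU, fun s ↦ by simp [hUf]⟩

theorem sum {ι : Type*} (s : Finset ι) {f : ι → V → F} (hf : ∀ i ∈ s, HasLineDegreeLE (f i) r) :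
    HasLineDegreeLE (fun v ↦ ∑ i ∈ s, f i v) r := by
  intro p u
  choose! U hU hUf using fun i hi ↦ hf i hi p u
  exact ⟨∑ i ∈ s, U i, natDegree_sum_le_of_forall_le s U hU, fun t ↦ by
    simp only [eval_finsetSum]; exact sum_congr rfl fun i hi ↦ hUf i hi t⟩

theorem prod {ι : Type*} (s : Finset ι) {f : ι → V → F} {r : ι → ℕ}
    (hf : ∀ i ∈ s, HasLineDegreeLE (f i) (r i)) :
    HasLineDegreeLE (fun v ↦ ∏ i ∈ s, f i v) (∑ i ∈ s, r i) := by
  intro p u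
  choose! U hU hUf using fun i hi ↦ hf i hi p u
  exact ⟨∏ i ∈ s, U i, (natDegree_prod_le s U).trans (sum_le_sum hU), fun t ↦ by
    simp only [eval_prod]; exact prod_congr rfl fun i hi ↦ hUf i hi t⟩

theorem apply_eq_zero_of_punctured_line [Fintype F] (hf : HasLineDegreeLE f r)
    (hr : r < Fintype.card F - 1) (p u : V) (hline : ∀ s : F, s ≠ 0 → f (p + s • u) = 0) :
    f p = 0 := by
  classical
  obtain ⟨U, hU, hUf⟩ := hf p u
  have hU0 : U = 0 := by
    refine eq_zero_of_natDegree_lt_card_of_eval_eq_zero' U (univ.erase 0) ?_ ?_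
    · intro s hs
      rw [hUf, hline s (ne_of_mem_erase hs)]
    · rw [card_erase_of_mem (mem_univ _), card_univ]
      exact hU.trans_lt hr
  simpa [hU0] using (hUf 0).symm

end HasLineDegreeLE

theorem hasLineDegreeLE_eval_comp (Q : F[X]) (ℓ : V →ₗ[F] F) :
    HasLineDegreeLE (fun v ↦ Q.eval (ℓ v)) Q.natDegree := fun p u ↦
  ⟨Q.comp (C (ℓ u) * X + C (ℓ p)), by
    simpa [natDegree_comp] using
      Nat.mul_le_mul_left Q.natDegree (natDegree_linear_le (a := ℓ u) (b := ℓ p)),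
    fun s ↦ by
      simp only [eval_comp, eval_add, eval_mul, eval_C, eval_X, map_add, map_smul, smul_eq_mul]
      ring_nf⟩

end LineDegree

section RecoveringSet

def IsRecoveringSet {α μ P M : Type*} (E : (μ → α) → P → M) (i : μ) (S : Finset P) : Prop :=
  ∀ x x', (∀ c ∈ S, E x c = E x' c) → x i = x' i

variable {K μ P M : Type*} [CommRing K] [AddCommGroup M] [Module K M]

theorem LinearMap.isRecoveringSet_of_eq_zero {E : (μ → K) →ₗ[K] (P → M)} {i : μ} {S : Finset P}
    (h : ∀ x, (∀ c ∈ S, E x c = 0) → x i = 0) : IsRecoveringSet E i S := fun x x' hxx' ↦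
  sub_eq_zero.mp <| by simpa using h (x - x') fun c hc ↦ by simp [hxx' c hc]

noncomputable def basisExpand {J : Type*} (b : Module.Basis J K M) :
    (P → M) →ₗ[K] (P × J → K) where
  toFun f c := b.repr (f c.1) c.2
  map_add' f g := by ext; simp
  map_smul' a f := by ext; simp

theorem IsRecoveringSet.basisExpand {J : Type*} [Fintype J] (b : Module.Basis J K M)
    {E : (μ → K) →ₗ[K] (P → M)} {i : μ} {S : Finset P} (h : IsRecoveringSet E i S) :
    IsRecoveringSet (basisExpand b ∘ₗ E) i (S ×ˢ univ) := fun x x' hxx' ↦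
  h x x' fun c hc ↦ b.repr.injective <|
    Finsupp.ext fun j ↦ hxx' (c, j) (mem_product.mpr ⟨hc, mem_univ j⟩)

end RecoveringSet

section PuncturedLine

variable {F : Type*} [Field F] [Fintype F] [DecidableEq F]

def puncturedLine {ι : Type*} [DecidableEq ι] [Fintype ι] (p u : ι → F) : Finset (ι → F) :=
  (univ.erase 0).image fun s : F ↦ p + s • u

theorem mem_puncturedLine {ι : Type*} [DecidableEq ι] [Fintype ι] {p u v : ι → F} :
    v ∈ puncturedLine p u ↔ ∃ s : F, s ≠ 0 ∧ p + s • u = v := by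
  simp [puncturedLine]

theorem disjoint_puncturedLine_cons_one {m : ℕ} (p : Fin (m + 1) → F) {w w' : Fin m → F}
    (hw : w ≠ w') :
    Disjoint (puncturedLine p (Fin.cons 1 w : Fin (m + 1) → F))
      (puncturedLine p (Fin.cons 1 w')) := by
  refine disjoint_left.mpr fun v hv hv' ↦ hw ?_
  obtain ⟨s, hs, rfl⟩ := mem_puncturedLine.mp hv
  obtain ⟨s', -, hss'⟩ := mem_puncturedLine.mp hv'
  have hdir := add_left_cancel hss'
  obtain rfl : s' = s := by simpa using congrFun hdir 0
  exact (Fin.cons_right_injective (1 : F)) (smul_right_injective (Fin (m + 1) → F) hs hdir.symm)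

end PuncturedLine

noncomputable section Interpolation

variable {F ι : Type*} [Field F] [DecidableEq F] [Fintype ι] (K : Type*) [Field K] [Algebra K F]
  (S : Finset F)

def lagrangeProd (a v : ι → F) : F :=
  ∏ j, (Lagrange.basis S id (a j)).eval (v j)

variable {S}

theorem lagrangeProd_self {a : ι → F} (ha : ∀ j, a j ∈ S) : lagrangeProd S a a = 1 :=
  prod_eq_one fun j _ ↦ Lagrange.eval_basis_self injective_id.injOn (ha j)

theorem lagrangeProd_of_ne {a b : ι → F} (hb : ∀ j, b j ∈ S) (hab : a ≠ b) :
    lagrangeProd S a b = 0 := by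
  obtain ⟨j, hj⟩ := Function.ne_iff.mp hab
  exact prod_eq_zero (mem_univ j) (Lagrange.eval_basis_of_ne (v := id) hj (hb j))

theorem hasLineDegreeLE_lagrangeProd {a : ι → F} (ha : ∀ j, a j ∈ S) :
    HasLineDegreeLE (lagrangeProd S a) (Fintype.card ι * (#S - 1)) := by
  have := HasLineDegreeLE.prod univ
    (f := fun j (v : ι → F) ↦ (Lagrange.basis S id (a j)).eval (v j)) fun j _ ↦
      hasLineDegreeLE_eval_comp (Lagrange.basis S id (a j))
        (LinearMap.proj (R := F) (φ := fun _ : ι ↦ F) j)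
  simp only [Lagrange.natDegree_basis injective_id.injOn (ha _), sum_const, card_univ,
    smul_eq_mul] at this
  exact this

variable {μ : Type*} [Fintype μ] (S)

def interpolate (g : μ → ι → F) : (μ → K) →ₗ[K] ((ι → F) → F) where
  toFun x v := ∑ i, algebraMap K F (x i) * lagrangeProd S (g i) v
  map_add' x y := by ext; simp [add_mul, sum_add_distrib]
  map_smul' c x := by ext; simp [Algebra.smul_def, mul_assoc, mul_sum]

variable {K S} {g : μ → ι → F}

theorem interpolate_apply_self (hg : Injective g) (hgS : ∀ i j, g i j ∈ S)
    (x : μ → K) (i : μ) : interpolate K S g x (g i) = algebraMap K F (x i) := by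
  simp only [interpolate, LinearMap.coe_mk, AddHom.coe_mk]
  rw [sum_eq_single i (fun i' _ hi' ↦ by rw [lagrangeProd_of_ne (hgS i) (hg.ne hi'), mul_zero])
    (fun h ↦ absurd (mem_univ i) h), lagrangeProd_self (hgS i), mul_one]

theorem hasLineDegreeLE_interpolate (hgS : ∀ i j, g i j ∈ S) (x : μ → K) :
    HasLineDegreeLE (interpolate K S g x) (Fintype.card ι * (#S - 1)) :=
  HasLineDegreeLE.sum univ fun i _ ↦ (hasLineDegreeLE_lagrangeProd (hgS i)).const_mul _

theorem isRecoveringSet_interpolate [Fintype F] [DecidableEq ι] (hg : Injective g)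
    (hgS : ∀ i j, g i j ∈ S) (hdeg : Fintype.card ι * (#S - 1) < Fintype.card F - 1)
    (i : μ) (u : ι → F) :
    IsRecoveringSet (interpolate K S g) i (puncturedLine (g i) u) := by
  refine LinearMap.isRecoveringSet_of_eq_zero fun x hx ↦ (algebraMap K F).injective ?_
  rw [map_zero, ← interpolate_apply_self hg hgS]
  exact (hasLineDegreeLE_interpolate hgS x).apply_eq_zero_of_punctured_line hdeg _ u
    fun s hs ↦ hx _ (mem_puncturedLine.mpr ⟨s, hs, rfl⟩)

end Interpolation

theorem existsPIRCode_of_isRecoveringSet {K : Type} {P κ : Type*} [Field K] [Fintype P]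
    [Fintype κ] {n : ℕ} (E : (Fin n → K) →ₗ[K] (P → K)) (R : Fin n → κ → Finset P)
    (hdisj : ∀ i, Pairwise (Disjoint on (R i))) (hrec : ∀ i a, IsRecoveringSet E i (R i a)) :
    ExistsPIRCode K (n + Fintype.card P) n (Fintype.card κ) := by
  let e : Fin n ⊕ P ≃ Fin (n + Fintype.card P) :=
    (Equiv.sumCongr (Equiv.refl _) (Fintype.equivFin P)).trans finSumFinEquiv
  let enc : (Fin n → K) →ₗ[K] (Fin (n + Fintype.card P) → K) :=
    LinearMap.funLeft K K e.symm ∘ₗ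
      (LinearEquiv.sumArrowLequivProdArrow _ _ K K).symm.toLinearMap ∘ₗ LinearMap.id.prod E
  have henc_inr (x : Fin n → K) (c : P) : enc x (e (Sum.inr c)) = E x c := by simp [enc]
  have hsys (x : Fin n → K) (i : Fin n) : enc x (Fin.castLE (Nat.le_add_right _ _) i) = x i := by
    have he : e (Sum.inl i) = Fin.castLE (Nat.le_add_right _ _) i := by ext; simp [e]
    simp [enc, ← he]
  let pos : P ↪ Fin (n + Fintype.card P) := Function.Embedding.inr.trans e.toEmbedding
  refine ⟨Nat.le_add_right _ _, enc, fun x y h ↦ funext fun i ↦ by rw [← hsys x i, ← hsys y i, h],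
    hsys, fun i ↦ ⟨fun a ↦ (R i ((Fintype.equivFin κ).symm a)).map pos, fun a b hab ↦ ?_, ?_⟩⟩
  · exact (disjoint_map pos).mpr (hdisj i ((Fintype.equivFin κ).symm.injective.ne hab))
  · intro a x x' hxx'
    refine hrec i ((Fintype.equivFin κ).symm a) x x' fun c hc ↦ ?_
    rw [← henc_inr, ← henc_inr]
    exact hxx' (pos c) (mem_map_of_mem pos hc)

theorem existsPIRCode_of_puncturedLines (K : Type) {F : Type*} [Field K] [Field F] [Fintype F]
    [Algebra K F] (S : Finset F) (m n : ℕ) (hn : n ≤ #S ^ (m + 1))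
    (hdeg : (m + 1) * (#S - 1) < Fintype.card F - 1) :
    ExistsPIRCode K (n + Fintype.card F ^ (m + 1) * Module.finrank K F) n
      (Fintype.card F ^ m) := by
  classical
  obtain ⟨g⟩ : Nonempty (Fin n ↪ (Fin (m + 1) → S)) :=
    Function.Embedding.nonempty_of_card_le (by simpa using hn)
  let points : Fin n → Fin (m + 1) → F := fun i j ↦ g i j
  have hinj : Injective points := fun i i' h ↦
    g.injective (funext fun j ↦ Subtype.ext (congrFun h j))
  have hS : ∀ i j, points i j ∈ S := fun i j ↦ (g i j).2
  have hdeg' : Fintype.card (Fin (m + 1)) * (#S - 1) < Fintype.card F - 1 := by simpa using hdeg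
  have := existsPIRCode_of_isRecoveringSet
    (basisExpand (Module.finBasis K F) ∘ₗ interpolate K S points)
    (fun i (w : Fin m → F) ↦ puncturedLine (points i) (Fin.cons 1 w) ×ˢ univ)
    (fun i w w' hw ↦ disjoint_product.mpr (.inl (disjoint_puncturedLine_cons_one _ hw)))
    (fun i w ↦ (isRecoveringSet_interpolate hinj hS hdeg' i _).basisExpand _)
  simpa [Fintype.card_prod, Fintype.card_fun] using this

theorem existsPIRCode_zmod_two {m d t n : ℕ} (hn : n ≤ 2 ^ (d * (m + 1))) (hdt : d + m < t) :
    ∃ N ≤ 2 ^ (t * (m + 2)), ExistsPIRCode (ZMod 2) N n (2 ^ (t * m)) := by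
  let F := GaloisField 2 t
  let : Fintype F := Fintype.ofFinite F
  have hcard : Fintype.card F = 2 ^ t := by
    rw [← Nat.card_eq_fintype_card, GaloisField.card 2 t (by omega)]
  obtain ⟨S, -, hS⟩ := exists_subset_card_eq (s := (univ : Finset F)) (n := 2 ^ d)
    (by rw [card_univ, hcard]; exact Nat.pow_le_pow_right two_pos (by omega))
  have hdeg : (m + 1) * (#S - 1) < Fintype.card F - 1 := by
    have h1 : (m + 1) * 2 ^ d ≤ 2 ^ (d + m) := by
      rw [pow_add, mul_comm]; exact Nat.mul_le_mul_left _ Nat.lt_two_pow_self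
    have h2 : 2 * 2 ^ (d + m) ≤ 2 ^ t := by
      rw [← pow_succ']; exact Nat.pow_le_pow_right two_pos hdt
    have h3 : 0 < 2 ^ (d + m) := by positivity
    rw [hS, hcard, Nat.mul_sub_one]
    omega
  have hcode := existsPIRCode_of_puncturedLines (ZMod 2) S m n (by rwa [hS, ← pow_mul]) hdeg
  rw [hcard, GaloisField.finrank 2 (by omega : t ≠ 0), ← pow_mul, ← pow_mul] at hcode
  refine ⟨_, ?_, hcode⟩
  have h1 : n ≤ 2 ^ (t * (m + 1)) := hn.trans (Nat.pow_le_pow_right two_pos (by nlinarith))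
  have h2 : t + 1 ≤ 2 ^ t := Nat.lt_two_pow_self
  calc n + 2 ^ (t * (m + 1)) * t ≤ 2 ^ (t * (m + 1)) * (t + 1) := by nlinarith
    _ ≤ 2 ^ (t * (m + 1)) * 2 ^ t := Nat.mul_le_mul_left _ h2
    _ = 2 ^ (t * (m + 2)) := by rw [← pow_add]; ring_nf

theorem exists_two_pow_bracket {A n : ℕ} (hn : 2 ^ A ≤ n) :
    ∃ b, n < 2 ^ b ∧ 2 ^ b ≤ 2 * n ∧ A < b := by
  have hn0 : n ≠ 0 := (Nat.pos_of_ne_zero (by positivity)).trans_le hn |>.ne'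
  refine ⟨Nat.log 2 n + 1, Nat.lt_pow_succ_log_self one_lt_two n, ?_,
    Nat.lt_succ_of_le (Nat.le_log_of_pow_le one_lt_two hn)⟩
  rw [pow_succ, mul_comm]
  exact Nat.mul_le_mul_left 2 (Nat.pow_log_le_self 2 hn0)

theorem div_succ_add_lt {m b t : ℕ} (hm : 0 < m) (hb : m * (m + 1) * (m + 2) ≤ b)
    (ht : b ≤ t * m) : b / (m + 1) + 1 + m < t := by
  have hQ : b / (m + 1) * (m + 1) ≤ b := Nat.div_mul_le_self b (m + 1)
  have hQ' : m * (m + 2) ≤ b / (m + 1) :=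
    (Nat.le_div_iff_mul_le (Nat.succ_pos m)).mpr (by linarith [mul_right_comm m (m + 1) (m + 2)])
  refine Nat.lt_of_succ_le (Nat.le_of_mul_le_mul_right ?_ hm)
  nlinarith

theorem rpow_le_two_pow_of_le {x ε : ℝ} {b k : ℕ} (hx : 0 ≤ x) (hxb : x ≤ 2 ^ b) (hε : 0 ≤ ε)
    (hk : ε * b ≤ k) : x ^ ε ≤ 2 ^ k :=
  calc x ^ ε ≤ ((2 : ℝ) ^ b) ^ ε := Real.rpow_le_rpow hx hxb hε
    _ = (2 : ℝ) ^ (b * ε) := by rw [← Real.rpow_natCast, ← Real.rpow_mul zero_le_two]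
    _ ≤ (2 : ℝ) ^ (k : ℝ) := Real.rpow_le_rpow_of_exponent_le one_le_two (by linarith)
    _ = 2 ^ k := Real.rpow_natCast 2 k

theorem two_pow_le_mul_rpow_of_le {x s : ℝ} {b c k : ℕ} (hbx : 2 ^ b ≤ 2 * x) (hs : 0 ≤ s)
    (hk : (k : ℝ) ≤ s * b + c) : (2 : ℝ) ^ k ≤ 2 ^ c * 2 ^ s * x ^ s := by
  have hx : 0 ≤ x := by linarith [pow_pos (two_pos (α := ℝ)) b]
  calc (2 : ℝ) ^ k = (2 : ℝ) ^ (k : ℝ) := (Real.rpow_natCast 2 k).symm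
    _ ≤ (2 : ℝ) ^ (s * b + c) := Real.rpow_le_rpow_of_exponent_le one_le_two hk
    _ = 2 ^ c * ((2 : ℝ) ^ b) ^ s := by
      rw [Real.rpow_add two_pos, Real.rpow_natCast, mul_comm, mul_comm s,
        Real.rpow_mul zero_le_two, Real.rpow_natCast]
    _ ≤ 2 ^ c * (2 * x) ^ s := by gcongr
    _ = 2 ^ c * 2 ^ s * x ^ s := by rw [Real.mul_rpow zero_le_two hx, mul_assoc]

theorem ceil_div_mul_add_two_le {ε τ : ℝ} {m b : ℕ} (hm : 0 < m) (hε : 0 ≤ ε)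
    (hmτ : 2 * ε / m ≤ τ) : (⌈ε * b / m⌉₊ : ℝ) * (m + 2) ≤ (ε + τ) * b + (m + 2) :=
  calc (⌈ε * b / m⌉₊ : ℝ) * (m + 2) ≤ (ε * b / m + 1) * (m + 2) := by
        gcongr; exact (Nat.ceil_lt_add_one (by positivity)).le
    _ = ε * b + 2 * ε / m * b + (m + 2) := by field_simp
    _ ≤ (ε + τ) * b + (m + 2) := by nlinarith [mul_le_mul_of_nonneg_right hmτ b.cast_nonneg]

/-- For every `ε ≥ 1` and `τ > 0` there are constants `c₁, c₂ > 0` and `n₀`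
such that for all `n ≥ n₀` there is a binary `k`-PIR code `[N,n,k]` with `k ≥ c₁·n^ε` and
length `N ≤ c₂·n^(ε+τ)`. -/
theorem stmt6 (ε τ : ℝ) (hε : 1 ≤ ε) (hτ : 0 < τ) :
    ∃ c1 c2 : ℝ, 0 < c1 ∧ 0 < c2 ∧ ∃ n0 : ℕ, ∀ n : ℕ, n0 ≤ n →
      ∃ N k : ℕ,
        c1 * (n : ℝ) ^ ε ≤ (k : ℝ) ∧
        (N : ℝ) ≤ c2 * (n : ℝ) ^ (ε + τ) ∧
        ExistsPIRCode (ZMod 2) N n k := by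
  set m := ⌈2 * ε / τ⌉₊
  have hm : 0 < m := Nat.ceil_pos.mpr (by positivity)
  have hmτ : 2 * ε / m ≤ τ := (div_le_iff₀ (by positivity)).mpr <| by
    rw [mul_comm τ]; exact (div_le_iff₀ hτ).mp (Nat.le_ceil _)
  refine ⟨1, 2 ^ (m + 2) * 2 ^ (ε + τ), one_pos, by positivity, 2 ^ (m * (m + 1) * (m + 2)),
    fun n hn ↦ ?_⟩
  obtain ⟨b, hnb, hbn, hb⟩ := exists_two_pow_bracket hn
  set t := ⌈ε * b / m⌉₊
  have hbt : ε * b ≤ t * m := (div_le_iff₀ (by positivity)).mp (Nat.le_ceil _)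
  have hbt' : b ≤ t * m := by exact_mod_cast (le_mul_of_one_le_left (by positivity) hε).trans hbt
  -- `2 ^ b` is the first power of two above `n`; the grid has side `2 ^ d` with `d (m + 1) > b`
  -- and the field is `𝔽_{2^t}` with `t m ≥ ε b`.
  obtain ⟨N, hN, hcode⟩ := existsPIRCode_zmod_two (d := b / (m + 1) + 1)
    (hnb.le.trans (Nat.pow_le_pow_right two_pos (by
      rw [add_mul, one_mul]; exact (Nat.lt_div_mul_add (Nat.succ_pos m)).le)))
    (div_succ_add_lt hm hb.le hbt')
  refine ⟨N, 2 ^ (t * m), ?_, ?_, hcode⟩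
  · rw [one_mul]
    exact_mod_cast rpow_le_two_pow_of_le n.cast_nonneg (by exact_mod_cast hnb.le) (by linarith)
      (by exact_mod_cast hbt)
  · calc (N : ℝ) ≤ 2 ^ (t * (m + 2)) := by exact_mod_cast hN
      _ ≤ 2 ^ (m + 2) * 2 ^ (ε + τ) * (n : ℝ) ^ (ε + τ) :=
        two_pow_le_mul_rpow_of_le (by exact_mod_cast hbn) (by linarith)
          (by push_cast; linarith [ceil_div_mul_add_two_le (b := b) hm (by linarith) hmτ])
end

section
/- Let q be a prime power and m, s, k, d positive integers with s ≥ 2, k ≤ ⌊q/m⌋^{s−1} and d ≤ m(q − k·m^{s−1} − 2). Then for every sequence (with possible repetitions) w_1,…,w_k of points of 𝔽_q^s there exist pairwise disjoint subsets R_1,…,R_k ⊆ 𝔽_q^s with w_j ∉ R_j for each j, such that for each j ∈ {1,…,k}, any two polynomials P, Q ∈ 𝔽_q[x_1,…,x_s] of total degree at most d satisfying P^{(<m)}(w) = Q^{(<m)}(w) for every w ∈ R_j also satisfy P^{(<m)}(w_j) = Q^{(<m)}(w_j). (That is, the multiplicity code C(m,d,s,q) is a k-batch code.) -/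
/-!
Fix a request `w₁, …, w_k`. Each request `j` gets a grid `V_j = {1} × B_{j,1} × ⋯ × B_{j,s-1}`
of directions, where the `B_{j,l}` are blocks of `m` elements of `𝔽_q`; since
`k ≤ ⌊q/m⌋^(s-1)`, the grids of different requests can be taken pairwise disjoint. `R_j` is the set
of points `w_j + t v` (`t ≠ 0`, `v ∈ V_j`) lying on no such punctured line of another request.
Lines with distinct directions normalised by `v 0 = 1` meet at most once, so every line through
`w_j` in a direction of `V_j` keeps more than `q - k m^(s-1) - 2` points in `R_j`.

If `f = P - Q` vanishes to order `m` on `R_j`, its restriction to such a line has degree `≤ d` and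
more than `d` roots counted with multiplicity, so it is zero. The `e`-th coefficient of the
restriction in direction `v` is `∑_{|J| = e} v^J f^{(J)}(w_j)`: for `e < m` this is a polynomial in
`v` whose degree in each variable is below the block size and which vanishes on `V_j`, hence it is
zero by the Combinatorial Nullstellensatz, and its coefficients are the Hasse derivatives of `f`
at `w_j`.
-/

open MvPolynomial

open Finset

theorem Polynomial.coeff_prod_eq_sum_finsuppAntidiag {R ι : Type*} [CommSemiring R] [DecidableEq ι]
    (p : ι → Polynomial R) (t : Finset ι) (e : ℕ) :
    (∏ i ∈ t, p i).coeff e = ∑ J ∈ t.finsuppAntidiag e, ∏ i ∈ t, (p i).coeff (J i) := by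
  simp only [← Polynomial.coeff_coe, ← Polynomial.coeToPowerSeries.ringHom_apply, map_prod,
    PowerSeries.coeff_prod]

theorem Polynomial.coeff_C_add_C_mul_X_pow {R : Type*} [CommSemiring R] (a b : R) (n j : ℕ) :
    ((C a + C b * X) ^ n).coeff j = n.choose j * a ^ (n - j) * b ^ j := by
  have h : (C a + C b * X) ^ n = ((X + C a) ^ n).comp (C b * X) := by
    rw [pow_comp, add_comp, X_comp, C_comp, add_comm]
  rw [h, comp_C_mul_X_coeff, coeff_X_add_C_pow]
  ring

theorem Polynomial.pow_X_sub_C_dvd_of_coeff_taylor_eq_zero {R : Type*} [CommRing R]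
    {p : Polynomial R} {t : R} {m : ℕ} (h : ∀ e < m, (taylor t p).coeff e = 0) :
    (X - C t) ^ m ∣ p := by
  rcases eq_or_ne p 0 with rfl | hp
  · exact dvd_zero _
  rw [← le_rootMultiplicity_iff hp, rootMultiplicity_eq_natTrailingDegree, ← taylor_apply]
  exact le_natTrailingDegree ((taylor_eq_zero t p).not.2 hp) h

theorem Polynomial.eq_zero_of_pow_X_sub_C_dvd {K : Type*} [Field K] {p : Polynomial K} {d m : ℕ}
    {T : Finset K} (hp : p.natDegree ≤ d) (hT : d < m * #T) (h : ∀ t ∈ T, (X - C t) ^ m ∣ p) :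
    p = 0 := by
  have hprod : ∏ t ∈ T, (X - C t) ^ m ∣ p :=
    prod_dvd_of_coprime
      (fun _ _ _ _ hab => (pairwise_coprime_X_sub_C Function.injective_id hab).pow) h
  refine eq_zero_of_dvd_of_natDegree_lt hprod ?_
  rw [natDegree_prod _ _ fun t _ => pow_ne_zero _ (X_sub_C_ne_zero t)]
  simp only [natDegree_pow, natDegree_X_sub_C, mul_one, sum_const, smul_eq_mul, mul_comm #T]
  omega

namespace MultiplicityCode

variable {F : Type*} [Field F] {s : ℕ}

theorem hasseDeriv_eq_sum (i : Fin s →₀ ℕ) (P : MvPolynomial (Fin s) F) :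
    hasseDeriv i P =
      (AddMonoidAlgebra.coeff P).sum fun n c =>
        monomial (n - i) ((∏ j, ((n j).choose (i j) : F)) * c) :=
  rfl

theorem hasseDeriv_add (i : Fin s →₀ ℕ) (P Q : MvPolynomial (Fin s) F) :
    hasseDeriv i (P + Q) = hasseDeriv i P + hasseDeriv i Q := by
  rw [hasseDeriv_eq_sum, hasseDeriv_eq_sum, hasseDeriv_eq_sum]
  exact Finsupp.sum_add_index' (by simp) fun _ _ _ => by rw [mul_add, map_add]

theorem hasseDeriv_sub (i : Fin s →₀ ℕ) (P Q : MvPolynomial (Fin s) F) :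
    hasseDeriv i (P - Q) = hasseDeriv i P - hasseDeriv i Q := by
  rw [hasseDeriv_eq_sum, hasseDeriv_eq_sum, hasseDeriv_eq_sum]
  exact Finsupp.sum_sub_index fun _ _ _ => by rw [mul_sub, map_sub]

theorem hasseDeriv_monomial (i n : Fin s →₀ ℕ) (c : F) :
    hasseDeriv i (monomial n c) = monomial (n - i) ((∏ j, ((n j).choose (i j) : F)) * c) := by
  classical
  by_cases hc : c = 0
  · simp [hasseDeriv, hc]
  · rw [hasseDeriv, support_monomial, if_neg hc, sum_singleton, coeff_monomial, if_pos rfl]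

theorem hasseDeriv_eq_zero_of_totalDegree_lt {i : Fin s →₀ ℕ} {P : MvPolynomial (Fin s) F}
    (h : P.totalDegree < ∑ j, i j) : hasseDeriv i P = 0 := by
  refine sum_eq_zero fun n hn => ?_
  have hn' := le_totalDegree hn
  rw [Finsupp.sum_fintype _ _ fun _ => rfl] at hn'
  obtain ⟨j, -, hj⟩ := exists_lt_of_sum_lt (hn'.trans_lt h)
  rw [prod_eq_zero (mem_univ j) (by rw [Nat.choose_eq_zero_of_lt hj, Nat.cast_zero]), zero_mul,
    monomial_zero]

noncomputable def restrictLine (f : MvPolynomial (Fin s) F) (x v : Fin s → F) : Polynomial F :=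
  aeval (fun l => Polynomial.C (x l) + Polynomial.C (v l) * Polynomial.X) f

theorem coeff_restrictLine (f : MvPolynomial (Fin s) F) (x v : Fin s → F) (e : ℕ) :
    (restrictLine f x v).coeff e =
      ∑ J ∈ univ.finsuppAntidiag e, (∏ l, v l ^ J l) * eval x (hasseDeriv J f) := by
  induction f using MvPolynomial.induction_on' with
  | monomial n c =>
    rw [restrictLine, aeval_monomial, Finsupp.prod_fintype _ _ fun _ => pow_zero _,
      Polynomial.algebraMap_eq, Polynomial.coeff_C_mul,
      Polynomial.coeff_prod_eq_sum_finsuppAntidiag, mul_sum]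
    refine sum_congr rfl fun J _ => ?_
    simp only [Polynomial.coeff_C_add_C_mul_X_pow, hasseDeriv_monomial, eval_monomial,
      Finsupp.prod_fintype _ _ fun _ => pow_zero _, Finsupp.tsub_apply, prod_mul_distrib]
    ring
  | add P Q hP hQ =>
    simp only [restrictLine, map_add, Polynomial.coeff_add] at hP hQ ⊢
    rw [hP, hQ, ← sum_add_distrib]
    simp only [hasseDeriv_add, map_add, mul_add]

theorem natDegree_restrictLine_le (f : MvPolynomial (Fin s) F) (x v : Fin s → F) :
    (restrictLine f x v).natDegree ≤ f.totalDegree := by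
  refine Polynomial.natDegree_le_iff_coeff_eq_zero.2 fun e he => ?_
  rw [coeff_restrictLine]
  refine sum_eq_zero fun J hJ => ?_
  rw [hasseDeriv_eq_zero_of_totalDegree_lt ((mem_finsuppAntidiag.1 hJ).1 ▸ he), map_zero,
    mul_zero]

theorem taylor_restrictLine (f : MvPolynomial (Fin s) F) (x v : Fin s → F) (t : F) :
    Polynomial.taylor t (restrictLine f x v) = restrictLine f (x + t • v) v := by
  rw [Polynomial.taylor_apply, Polynomial.comp_eq_aeval, restrictLine, ← AlgHom.comp_apply,
    comp_aeval, restrictLine]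
  congr 2
  funext l
  simp only [map_add, map_mul, Polynomial.aeval_X, Polynomial.aeval_C, Polynomial.algebraMap_eq,
    Pi.add_apply, Pi.smul_apply, smul_eq_mul]
  ring

def VanishesToOrder (m : ℕ) (f : MvPolynomial (Fin s) F) (x : Fin s → F) : Prop :=
  ∀ i : Fin s →₀ ℕ, ∑ j, i j < m → eval x (hasseDeriv i f) = 0

theorem vanishesToOrder_sub_iff {m : ℕ} {P Q : MvPolynomial (Fin s) F} {x : Fin s → F} :
    VanishesToOrder m (P - Q) x ↔
      ∀ i : Fin s →₀ ℕ, ∑ j, i j < m → eval x (hasseDeriv i P) = eval x (hasseDeriv i Q) := by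
  simp only [VanishesToOrder, hasseDeriv_sub, map_sub, sub_eq_zero]

theorem restrictLine_eq_zero {m d : ℕ} {f : MvPolynomial (Fin s) F} (hf : f.totalDegree ≤ d)
    {x v : Fin s → F} {T : Finset F} (hT : d < m * #T)
    (hvan : ∀ t ∈ T, VanishesToOrder m f (x + t • v)) : restrictLine f x v = 0 := by
  refine Polynomial.eq_zero_of_pow_X_sub_C_dvd ((natDegree_restrictLine_le f x v).trans hf) hT
    fun t ht => Polynomial.pow_X_sub_C_dvd_of_coeff_taylor_eq_zero fun e he => ?_
  rw [taylor_restrictLine, coeff_restrictLine]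
  refine sum_eq_zero fun J hJ => ?_
  rw [hvan t ht J ((mem_finsuppAntidiag.1 hJ).1.trans_lt he), mul_zero]

theorem sum_apply_eq_add_sum_tail (J : Fin (s + 1) →₀ ℕ) : ∑ j, J j = J 0 + ∑ l, J.tail l := by
  simp only [Fin.sum_univ_succ, Finsupp.tail_apply]

theorem tail_injOn_finsuppAntidiag (e : ℕ) :
    Set.InjOn Finsupp.tail
      ((univ : Finset (Fin (s + 1))).finsuppAntidiag e : Set (Fin (s + 1) →₀ ℕ)) := by
  intro J hJ J' hJ' h
  have hJe := (mem_finsuppAntidiag.1 hJ).1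
  have hJ'e := (mem_finsuppAntidiag.1 hJ').1
  rw [sum_apply_eq_add_sum_tail, h] at hJe
  rw [sum_apply_eq_add_sum_tail] at hJ'e
  rw [← Finsupp.cons_tail J, ← Finsupp.cons_tail J', h]
  congr 1
  omega

theorem eval_hasseDeriv_eq_zero_of_restrictLine_eq_zero {f : MvPolynomial (Fin (s + 1)) F}
    {x : Fin (s + 1) → F} {e : ℕ} {B : Fin s → Finset F} (hB : ∀ l, e < #(B l))
    (h : ∀ u ∈ Fintype.piFinset B, restrictLine f x (Fin.cons 1 u) = 0)
    {i : Fin (s + 1) →₀ ℕ} (hi : ∑ j, i j = e) : eval x (hasseDeriv i f) = 0 := by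
  classical
  -- the degree-`e` part of the Taylor expansion of `f` at `x`, dehomogenised in the variable `0`
  set G : MvPolynomial (Fin s) F :=
    ∑ J ∈ univ.finsuppAntidiag e, monomial J.tail (eval x (hasseDeriv J f)) with hGdef
  have hG : ∀ u, eval u G = (restrictLine f x (Fin.cons 1 u)).coeff e := by
    intro u
    rw [coeff_restrictLine, map_sum]
    refine sum_congr rfl fun J _ => ?_
    rw [eval_monomial, Finsupp.prod_fintype _ _ fun _ => pow_zero _, Fin.prod_univ_succ]
    simp [Finsupp.tail_apply, mul_comm]
  have hGdeg : G.totalDegree ≤ e := by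
    refine (totalDegree_finsetSum _ _).trans (Finset.sup_le fun J hJ => ?_)
    refine (totalDegree_monomial_le _ _).trans ?_
    rw [Finsupp.sum_fintype _ _ fun _ => rfl, ← (mem_finsuppAntidiag.1 hJ).1,
      sum_apply_eq_add_sum_tail]
    exact Nat.le_add_left _ _
  have hG0 : G = 0 := eq_zero_of_eval_zero_at_prod_finset G B
    (fun l => ((degreeOf_le_totalDegree G l).trans hGdeg).trans_lt (hB l))
    (fun u hu => by rw [hG, h u (Fintype.mem_piFinset.2 hu), Polynomial.coeff_zero])
  have hi' : i ∈ univ.finsuppAntidiag e := mem_finsuppAntidiag.2 ⟨hi, subset_univ _⟩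
  have hcoeff : coeff i.tail G = eval x (hasseDeriv i f) := by
    rw [hGdef, coeff_sum, sum_eq_single_of_mem i hi', coeff_monomial, if_pos rfl]
    intro J hJ hJi
    rw [coeff_monomial, if_neg fun h => hJi (tail_injOn_finsuppAntidiag e hJ hi' h)]
  rw [← hcoeff, hG0, coeff_zero]

theorem vanishesToOrder_of_lines {m d : ℕ} {f : MvPolynomial (Fin (s + 1)) F}
    (hf : f.totalDegree ≤ d) {x : Fin (s + 1) → F} {B : Fin s → Finset F} (hB : ∀ l, m ≤ #(B l))
    {R : Set (Fin (s + 1) → F)} (hR : ∀ u ∈ R, VanishesToOrder m f u)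
    (hlines : ∀ u ∈ Fintype.piFinset B,
      ∃ T : Finset F, d < m * #T ∧ ∀ t ∈ T, x + t • Fin.cons 1 u ∈ R) :
    VanishesToOrder m f x := by
  intro i hi
  refine eval_hasseDeriv_eq_zero_of_restrictLine_eq_zero (fun l => hi.trans_le (hB l))
    (fun u hu => ?_) rfl
  obtain ⟨T, hT, hTR⟩ := hlines u hu
  exact restrictLine_eq_zero hf hT fun t ht => hR _ (hTR t ht)

section RecoverySets

variable {E : Type*} [AddCommGroup E] [Module F E] [DecidableEq E] {k : ℕ}
  [Fintype F]

theorem card_filter_exists_add_smul_eq_le_one (φ : E →ₗ[F] F) {v v' : E}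
    (hv : φ v = 1) (hv' : φ v' = 1) (hne : v ≠ v') (x x' : E) :
    #(univ.filter fun t : F => ∃ t' : F, x + t • v = x' + t' • v') ≤ 1 := by
  refine card_le_one.2 fun t₁ h₁ t₂ h₂ => by_contra fun ht => hne ?_
  obtain ⟨t₁', e₁⟩ := (mem_filter.1 h₁).2
  obtain ⟨t₂', e₂⟩ := (mem_filter.1 h₂).2
  have hdiff : (t₁ - t₂) • v = (t₁' - t₂') • v' := by
    linear_combination (norm := module) e₁ - e₂
  have hcoef : t₁ - t₂ = t₁' - t₂' := by
    simpa [hv, hv'] using congrArg φ hdiff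
  rw [← hcoef] at hdiff
  exact smul_right_injective E (sub_ne_zero.2 ht) hdiff

variable [DecidableEq F]

variable (F) in
def puncturedLines (x : E) (V : Finset E) : Finset E :=
  (V ×ˢ univ.erase (0 : F)).image fun p => x + p.2 • p.1

theorem mem_puncturedLines {x y : E} {V : Finset E} :
    y ∈ puncturedLines F x V ↔ ∃ v ∈ V, ∃ t : F, t ≠ 0 ∧ x + t • v = y := by
  simp only [puncturedLines, mem_image, mem_product, mem_erase, mem_univ, and_true, Prod.exists,
    and_assoc, exists_and_left]

variable (F) in
def recoverySet (w : Fin k → E) (V : Fin k → Finset E) (a : Fin k) : Finset E :=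
  puncturedLines F (w a) (V a) \ (univ.erase a).biUnion fun j => puncturedLines F (w j) (V j)

theorem disjoint_recoverySet (w : Fin k → E) (V : Fin k → Finset E) {a b : Fin k} (hab : a ≠ b) :
    Disjoint (recoverySet F w V a) (recoverySet F w V b) := by
  refine disjoint_left.2 fun y hya hyb => (mem_sdiff.1 hyb).2 ?_
  exact mem_biUnion.2 ⟨a, mem_erase.2 ⟨hab, mem_univ a⟩, (mem_sdiff.1 hya).1⟩

theorem notMem_recoverySet (w : Fin k → E) {V : Fin k → Finset E} {a : Fin k}
    (hV : ∀ v ∈ V a, v ≠ 0) : w a ∉ recoverySet F w V a := by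
  intro h
  obtain ⟨v, hv, t, ht, heq⟩ := mem_puncturedLines.1 (mem_sdiff.1 h).1
  exact smul_ne_zero ht (hV v hv) (add_eq_left.1 heq)

theorem card_le_card_filter_mem_recoverySet (φ : E →ₗ[F] F) {w : Fin k → E}
    {V : Fin k → Finset E} (hV : ∀ j, ∀ v ∈ V j, φ v = 1)
    (hVdisj : Pairwise fun i j => Disjoint (V i) (V j))
    {a : Fin k} {v : E} (hv : v ∈ V a) :
    Fintype.card F ≤
      #(univ.filter fun t : F => w a + t • v ∈ recoverySet F w V a) + 1 +
        ∑ j ∈ univ.erase a, #(V j) := by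
  set T := univ.filter fun t : F => w a + t • v ∈ recoverySet F w V a
  set meet : Fin k → E → Finset F :=
    fun j v' => univ.filter fun t => ∃ t' : F, w a + t • v = w j + t' • v'
  have hcover : univ ⊆ T ∪ insert 0 ((univ.erase a).biUnion fun j => (V j).biUnion (meet j)) := by
    intro t _
    by_cases hT : t ∈ T
    · exact mem_union_left _ hT
    refine mem_union_right _ (mem_insert.2 (or_iff_not_imp_left.2 fun ht => ?_))
    have hmem : w a + t • v ∈ puncturedLines F (w a) (V a) :=
      mem_puncturedLines.2 ⟨v, hv, t, ht, rfl⟩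
    have hother : w a + t • v ∈ (univ.erase a).biUnion fun j => puncturedLines F (w j) (V j) :=
      not_not.1 fun h => hT (mem_filter.2 ⟨mem_univ _, mem_sdiff.2 ⟨hmem, h⟩⟩)
    obtain ⟨j, hj, hjmem⟩ := mem_biUnion.1 hother
    obtain ⟨v', hv', t', -, heq⟩ := mem_puncturedLines.1 hjmem
    exact mem_biUnion.2 ⟨j, hj, mem_biUnion.2 ⟨v', hv', mem_filter.2 ⟨mem_univ _, t', heq.symm⟩⟩⟩
  have hmeet : ∀ j ∈ univ.erase a, ∀ v' ∈ V j, #(meet j v') ≤ 1 := fun j hj v' hv' =>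
    card_filter_exists_add_smul_eq_le_one φ (hV a v hv) (hV j v' hv')
      (fun h => disjoint_left.1 (hVdisj (ne_of_mem_erase hj).symm) hv (h ▸ hv')) _ _
  have hU : #((univ.erase a).biUnion fun j => (V j).biUnion (meet j)) ≤
      ∑ j ∈ univ.erase a, #(V j) :=
    card_biUnion_le.trans <| sum_le_sum fun j hj =>
      card_biUnion_le.trans <| (sum_le_sum (hmeet j hj)).trans (by simp)
  have hcard := (card_le_card hcover).trans ((card_union_le _ _).trans
    (Nat.add_le_add_left (card_insert_le _ _) _))
  rw [card_univ] at hcard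
  omega

theorem exists_lt_mul_card_mem_recoverySet (φ : E →ₗ[F] F) {w : Fin k → E}
    {V : Fin k → Finset E} (hV : ∀ j, ∀ v ∈ V j, φ v = 1)
    (hVdisj : Pairwise fun i j => Disjoint (V i) (V j)) {M : ℕ} (hVcard : ∀ j, #(V j) = M)
    {m d : ℕ} (hm : 0 < m) (hd : 0 < d) (hdq : d ≤ m * (Fintype.card F - k * M - 2))
    {a : Fin k} {v : E} (hv : v ∈ V a) :
    ∃ T : Finset F, d < m * #T ∧ ∀ t ∈ T, w a + t • v ∈ recoverySet F w V a := by
  refine ⟨univ.filter fun t : F => w a + t • v ∈ recoverySet F w V a, ?_,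
    fun t ht => (mem_filter.1 ht).2⟩
  have hcount := card_le_card_filter_mem_recoverySet φ hV hVdisj (w := w) hv
  rw [sum_congr rfl fun j _ => hVcard j, sum_const, card_erase_of_mem (mem_univ a), card_univ,
    Fintype.card_fin, smul_eq_mul] at hcount
  have hq : 0 < Fintype.card F - k * M - 2 := Nat.pos_of_mul_pos_left (hd.trans_le hdq)
  have hkM : (k - 1) * M + M = k * M := by
    rw [← Nat.succ_mul, Nat.succ_eq_add_one, Nat.sub_add_cancel a.pos]
  exact hdq.trans_lt (Nat.mul_lt_mul_of_pos_left (by omega) hm)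

end RecoverySets

theorem exists_pairwise_disjoint_card_eq {α : Type*} [Fintype α] {K m : ℕ}
    (h : K * m ≤ Fintype.card α) :
    ∃ blk : Fin K → Finset α,
      (∀ t, #(blk t) = m) ∧ Pairwise fun t t' => Disjoint (blk t) (blk t') := by
  obtain ⟨ι⟩ := Function.Embedding.nonempty_of_card_le (α := Fin K × Fin m) (by simpa using h)
  refine ⟨fun t => univ.map ⟨fun r => ι (t, r), fun r r' h => (Prod.ext_iff.1 (ι.injective h)).2⟩,
    fun t => by simp, fun t t' htt' => disjoint_left.2 ?_⟩
  intro _ h₁ h₂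
  obtain ⟨r, -, rfl⟩ := mem_map.1 h₁
  obtain ⟨r', -, h⟩ := mem_map.1 h₂
  exact htt' (Prod.ext_iff.1 (ι.injective h)).1.symm

theorem exists_pairwise_disjoint_piFinset {α : Type*} [Fintype α] {m n k : ℕ}
    (hk : k ≤ (Fintype.card α / m) ^ n) :
    ∃ B : Fin k → Fin n → Finset α, (∀ j l, #(B j l) = m) ∧
      Pairwise fun j j' => Disjoint (Fintype.piFinset (B j)) (Fintype.piFinset (B j')) := by
  obtain ⟨blk, hcard, hdisj⟩ := exists_pairwise_disjoint_card_eq (α := α) (Nat.div_mul_le_self _ m)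
  obtain ⟨c⟩ := Function.Embedding.nonempty_of_card_le
    (α := Fin k) (β := Fin n → Fin (Fintype.card α / m)) (by simpa using hk)
  refine ⟨fun j l => blk (c j l), fun j l => hcard _, fun j j' hjj' => disjoint_left.2 ?_⟩
  obtain ⟨l, hl⟩ := Function.ne_iff.1 (c.injective.ne hjj')
  exact fun u hu hu' => disjoint_left.1 (hdisj hl) (Fintype.mem_piFinset.1 hu l)
    (Fintype.mem_piFinset.1 hu' l)

end MultiplicityCode

open MultiplicityCode in
theorem stmt7_general {F : Type*} [Field F] [Fintype F] (q m d s k : ℕ)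
    (hcard : Fintype.card F = q) (hm : 0 < m) (hd : 0 < d) (hs : 2 ≤ s)
    (hkq : k ≤ (q / m) ^ (s - 1))
    (hdq : d ≤ m * (q - k * m ^ (s - 1) - 2)) :
    ∀ w : Fin k → (Fin s → F),
      ∃ R : Fin k → Set (Fin s → F),
        (∀ a b, a ≠ b → Disjoint (R a) (R b)) ∧
        (∀ a, w a ∉ R a) ∧
        (∀ a, ∀ P Q : MvPolynomial (Fin s) F, P.totalDegree ≤ d → Q.totalDegree ≤ d →
          (∀ u ∈ R a, ∀ i : Fin s →₀ ℕ, (∑ j : Fin s, i j) < m →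
            eval u (hasseDeriv i P) = eval u (hasseDeriv i Q)) →
          ∀ i : Fin s →₀ ℕ, (∑ j : Fin s, i j) < m →
            eval (w a) (hasseDeriv i P) = eval (w a) (hasseDeriv i Q)) := by
  classical
  intro w
  obtain ⟨n, rfl⟩ : ∃ n, s = n + 1 := ⟨s - 1, by omega⟩
  rw [Nat.add_sub_cancel] at hkq hdq
  obtain ⟨B, hBcard, hBdisj⟩ := exists_pairwise_disjoint_piFinset (α := F) (m := m) (hcard ▸ hkq)
  set V : Fin k → Finset (Fin (n + 1) → F) := fun j => (Fintype.piFinset (B j)).image (Fin.cons 1)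
  have hV : ∀ j, ∀ v ∈ V j, LinearMap.proj (R := F) (φ := fun _ => F) 0 v = 1 := by
    simp [V]
  have hVdisj : Pairwise fun j j' => Disjoint (V j) (V j') := fun j j' h =>
    (disjoint_image (Fin.cons_right_injective _)).2 (hBdisj h)
  have hVcard : ∀ j, #(V j) = m ^ n := fun j => by
    simp [V, card_image_of_injective _ (Fin.cons_right_injective _), hBcard]
  refine ⟨fun a => recoverySet F w V a,
    fun a b hab => disjoint_coe.2 (disjoint_recoverySet w V hab),
    fun a => notMem_recoverySet w fun v hv h => by simpa [h] using hV a v hv, ?_⟩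
  intro a P Q hP hQ hPQ
  exact vanishesToOrder_sub_iff.1 (vanishesToOrder_of_lines
    ((totalDegree_sub P Q).trans (max_le hP hQ)) (fun l => (hBcard a l).ge)
    (fun u hu => vanishesToOrder_sub_iff.2 (hPQ u hu)) fun u hu =>
      exists_lt_mul_card_mem_recoverySet _ hV hVdisj hVcard hm hd (by rwa [hcard])
        (mem_image_of_mem _ hu))

/-- For `s ≥ 2`, `k ≤ ⌊q/m⌋^(s-1)` and `d ≤ m(q - k·m^(s-1) - 2)`, the
multiplicity code `C(m,d,s,q)` is a `k`-batch code: every multiset request `w₁,…,w_k` of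
coordinates can be answered by pairwise disjoint recovering sets `R₁,…,R_k` with
`w_j ∉ R_j`. -/
theorem stmt7 {F : Type*} [Field F] [Fintype F] (q m d s k : ℕ)
    (hcard : Fintype.card F = q) (hm : 0 < m) (hd : 0 < d) (hs : 2 ≤ s) (hk : 0 < k)
    (hkq : k ≤ (q / m) ^ (s - 1))
    (hdq : d ≤ m * (q - k * m ^ (s - 1) - 2)) :
    ∀ w : Fin k → (Fin s → F),
      ∃ R : Fin k → Set (Fin s → F),
        (∀ a b, a ≠ b → Disjoint (R a) (R b)) ∧
        (∀ a, w a ∉ R a) ∧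
        (∀ a, ∀ P Q : MvPolynomial (Fin s) F, P.totalDegree ≤ d → Q.totalDegree ≤ d →
          (∀ u ∈ R a, ∀ i : Fin s →₀ ℕ, (∑ j : Fin s, i j) < m →
            eval u (hasseDeriv i P) = eval u (hasseDeriv i Q)) →
          ∀ i : Fin s →₀ ℕ, (∑ j : Fin s, i j) < m →
            eval (w a) (hasseDeriv i P) = eval (w a) (hasseDeriv i Q)) :=
  stmt7_general q m d s k hcard hm hd hs hkq hdq
end

section
/- Let p be a prime, n = p², and k an integer with 1 ≤ k ≤ p. Then the array code C(r = p, p, S = {0,1,…,k−1}) is a binary k-PIR code [p² + kp, p², k]^P; in particular its redundancy is kp = k·√n, so r_P(n,k) ≤ k·√n for n = p² and k ≤ √n. -/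
/-- The diagonal `D_{s,t} = { (i, (t + i·s) mod p) : i ∈ [r] } ⊆ [r] × [p]`. -/
def diag (r p s t : ℕ) : Finset (ℕ × ℕ) :=
  (Finset.range r).image fun i => (i, (t + i * s) % p)

/-- The encoder of the array code `C(r, p, S)` with slope set `S = {S 0, …, S (k-1)}`: the
`r × p` information array `x` is kept systematically, and for each slope index `ℓ ∈ [k]` and
each `t ∈ [p]` a parity bit `ρ_{ℓ,t} = ∑_{(i,j) ∈ D_{S ℓ, t}} x_{i,j}` is appended. -/
def arrayEncode (r p k : ℕ) (S : Fin k → ℕ) (x : Fin r × Fin p → ZMod 2) :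
    (Fin r × Fin p) ⊕ (Fin k × Fin p) → ZMod 2 :=
  fun c =>
    match c with
    | Sum.inl ij => x ij
    | Sum.inr (l, t) =>
        ∑ ij ∈ Finset.univ.filter
            (fun ij : Fin r × Fin p => ((ij.1 : ℕ), (ij.2 : ℕ)) ∈ diag r p (S l) (t : ℕ)),
          x ij

/-!
Through the cell `(i, j)` pass the `k` lines `v = t_a + a·u` of slopes `a ∈ [k]`
in `𝔽_p²`. For each of them the parity bit of that diagonal together with the other cells of
the diagonal recovers `x_{i,j}`. Two lines of distinct slopes (distinct mod `p`, as `k ≤ p`)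
meet only in `(i, j)`, so these `k` recovering sets are pairwise disjoint.
-/

section ArrayCode

variable {r p k : ℕ}

def diagCells (r p s t : ℕ) : Finset (Fin r × Fin p) :=
  Finset.univ.filter fun ij => ((ij.1 : ℕ), (ij.2 : ℕ)) ∈ diag r p s t

theorem arrayEncode_inr (S : Fin k → ℕ) (x : Fin r × Fin p → ZMod 2) (l : Fin k) (t : Fin p) :
    arrayEncode r p k S x (Sum.inr (l, t)) = ∑ ij ∈ diagCells r p (S l) t, x ij :=
  rfl

def diagRecoverySet (S : Fin k → ℕ) (l : Fin k) (t : Fin p) (ij : Fin r × Fin p) :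
    Finset ((Fin r × Fin p) ⊕ (Fin k × Fin p)) :=
  insert (Sum.inr (l, t)) (((diagCells r p (S l) t).erase ij).image Sum.inl)

theorem eq_of_forall_diagRecoverySet {S : Fin k → ℕ} {l : Fin k} {t : Fin p}
    {ij : Fin r × Fin p} (hij : ij ∈ diagCells r p (S l) t) {x x' : Fin r × Fin p → ZMod 2}
    (h : ∀ c ∈ diagRecoverySet S l t ij, arrayEncode r p k S x c = arrayEncode r p k S x' c) :
    x ij = x' ij := by
  have hparity := h _ (Finset.mem_insert_self _ _)
  have hrest : ∀ uv ∈ (diagCells r p (S l) t).erase ij, x uv = x' uv := fun uv huv =>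
    h _ (Finset.mem_insert_of_mem (Finset.mem_image_of_mem _ huv))
  rw [arrayEncode_inr, arrayEncode_inr, ← Finset.add_sum_erase _ _ hij,
    ← Finset.add_sum_erase _ _ hij, Finset.sum_congr rfl hrest] at hparity
  exact add_right_cancel hparity

theorem disjoint_diagRecoverySet {S : Fin k → ℕ} {l l' : Fin k} {t t' : Fin p}
    {ij : Fin r × Fin p} (hl : l ≠ l')
    (hmeet : ∀ c ∈ diagCells r p (S l) t, c ∈ diagCells r p (S l') t' → c = ij) :
    Disjoint (diagRecoverySet S l t ij) (diagRecoverySet S l' t' ij) := by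
  rw [diagRecoverySet, diagRecoverySet, Finset.disjoint_insert_left,
    Finset.disjoint_insert_right, Finset.disjoint_image Sum.inl_injective]
  refine ⟨by simp [hl], by simp, Finset.disjoint_left.2 fun c hc hc' => ?_⟩
  exact (Finset.mem_erase.1 hc).1 (hmeet c (Finset.mem_erase.1 hc).2 (Finset.mem_erase.1 hc').2)

end ArrayCode

section ZModLines

variable {p : ℕ}

theorem mem_diagCells_iff {r s t : ℕ} {u : Fin r} {v : Fin p} :
    (u, v) ∈ diagCells r p s t ↔ ((v : ℕ) : ZMod p) = t + (u : ℕ) * s := by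
  rw [← Nat.cast_mul, ← Nat.cast_add, ZMod.natCast_eq_natCast_iff', Nat.mod_eq_of_lt v.isLt]
  simp only [diagCells, diag, Finset.mem_filter, Finset.mem_univ, true_and, Finset.mem_image,
    Finset.mem_range, Prod.mk.injEq]
  constructor
  · rintro ⟨_, _, rfl, hv⟩
    exact hv.symm
  · exact fun hv => ⟨u, u.isLt, rfl, hv.symm⟩

theorem eq_of_natCast_zmod_eq {a b : ℕ} (ha : a < p) (hb : b < p)
    (h : (a : ZMod p) = b) : a = b := by
  rw [← ZMod.val_natCast_of_lt ha, h, ZMod.val_natCast_of_lt hb]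

theorem eq_of_mem_lines {F : Type*} [Field F] {s s' t t' u v i j : F} (hs : s ≠ s')
    (huv : v = t + u * s) (huv' : v = t' + u * s') (hij : j = t + i * s)
    (hij' : j = t' + i * s') : u = i ∧ v = j := by
  have hprod : (u - i) * (s - s') = 0 := by linear_combination huv' - huv - hij' + hij
  have hu : u = i := sub_eq_zero.1 ((mul_eq_zero.1 hprod).resolve_right (sub_ne_zero.2 hs))
  exact ⟨hu, by rw [huv, hij, hu]⟩

def diagIntercept [NeZero p] (i j : Fin p) (s : ℕ) : Fin p :=
  ⟨(((j : ℕ) - (i : ℕ) * s : ℤ) : ZMod p).val, ZMod.val_lt _⟩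

theorem mem_diagCells_diagIntercept [NeZero p] (i j : Fin p) (s : ℕ) :
    (i, j) ∈ diagCells p p s (diagIntercept i j s) := by
  rw [mem_diagCells_iff, diagIntercept, ZMod.natCast_val, ZMod.cast_id]
  push_cast
  ring

theorem eq_of_mem_diagCells_diagIntercept [Fact p.Prime] {i j : Fin p} {s s' : ℕ}
    (hs : (s : ZMod p) ≠ s') {c : Fin p × Fin p}
    (hc : c ∈ diagCells p p s (diagIntercept i j s))
    (hc' : c ∈ diagCells p p s' (diagIntercept i j s')) : c = (i, j) := by
  obtain ⟨u, v⟩ := c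
  rw [mem_diagCells_iff] at hc hc'
  have hij := mem_diagCells_iff.1 (mem_diagCells_diagIntercept i j s)
  have hij' := mem_diagCells_iff.1 (mem_diagCells_diagIntercept i j s')
  obtain ⟨hu, hv⟩ := eq_of_mem_lines hs hc hc' hij hij'
  rw [Fin.ext (eq_of_natCast_zmod_eq u.isLt i.isLt hu),
    Fin.ext (eq_of_natCast_zmod_eq v.isLt j.isLt hv)]

end ZModLines

theorem stmt13_general (p k : ℕ) (hp : p.Prime) (hkp : k ≤ p) :
    ∀ ij : Fin p × Fin p,
      ∃ R : Fin k → Finset ((Fin p × Fin p) ⊕ (Fin k × Fin p)),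
        (∀ a b, a ≠ b → Disjoint (R a) (R b)) ∧
        ∀ a, ∀ x x' : Fin p × Fin p → ZMod 2,
          (∀ c ∈ R a, arrayEncode p p k (fun l => (l : ℕ)) x c
                    = arrayEncode p p k (fun l => (l : ℕ)) x' c) →
          x ij = x' ij := by
  have : Fact p.Prime := ⟨hp⟩
  rintro ⟨i, j⟩
  refine ⟨fun a => diagRecoverySet (fun l => (l : ℕ)) a (diagIntercept i j a) (i, j),
    fun a b hab => disjoint_diagRecoverySet hab fun c hc hc' => ?_,
    fun a x x' => eq_of_forall_diagRecoverySet (mem_diagCells_diagIntercept i j a)⟩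
  have hslopes : ((a : ℕ) : ZMod p) ≠ (b : ℕ) := fun h =>
    hab (Fin.ext (eq_of_natCast_zmod_eq (a.isLt.trans_le hkp) (b.isLt.trans_le hkp) h))
  exact eq_of_mem_diagCells_diagIntercept hslopes hc hc'

/-- For `p` prime and `1 ≤ k ≤ p`, the array code
`C(r = p, p, S = {0,1,…,k-1})` — a binary systematic code of dimension `n = p²` and
redundancy `kp = k·√n` — is a `k`-PIR code: every information coordinate has `k` pairwise
disjoint recovering sets.  In particular `r_P(p², k) ≤ k·p`. -/
theorem stmt13 (p k : ℕ) (hp : p.Prime) (hk1 : 1 ≤ k) (hkp : k ≤ p) :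
    ∀ ij : Fin p × Fin p,
      ∃ R : Fin k → Finset ((Fin p × Fin p) ⊕ (Fin k × Fin p)),
        (∀ a b, a ≠ b → Disjoint (R a) (R b)) ∧
        ∀ a, ∀ x x' : Fin p × Fin p → ZMod 2,
          (∀ c ∈ R a, arrayEncode p p k (fun l => (l : ℕ)) x c
                    = arrayEncode p p k (fun l => (l : ℕ)) x' c) →
          x ij = x' ij :=
  stmt13_general p k hp hkp
end

section
/- Let C be a binary systematic [N,n] code and r, k positive integers. Suppose that for every information coordinate i ∈ {1,…,n} there is a fixed collection of k pairwise disjoint recovering sets R_{i,1},…,R_{i,k} ⊆ {1,…,N} for i, each of size at most r, and suppose that for every pair of distinct indices i, j ∈ {1,…,n} and every a ∈ {1,…,k}, the set R_{i,a} intersects at most one of the sets R_{j,1},…,R_{j,k}. Then C is an (r,k)-batch code. -/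
/-!
Answer the requests one at a time, each by one of the `k` recovering sets of its coordinate.
Each set already chosen meets at most one of the `k` candidates of the current coordinate
(within one family because the sets are disjoint, across families by hypothesis), so fewer
than `k` candidates are excluded and a free one remains.
-/

open Finset

section GreedyChoice

variable {ι κ α : Type*} [Fintype κ]

theorem exists_forall_disjoint_of_card_lt (F : ι → κ → Finset α)
    (hblock : ∀ a a', a ≠ a' → ∀ c, {b | ¬Disjoint (F a b) (F a' c)}.Subsingleton)
    {s : Finset ι} {a : ι} (ha : a ∉ s) (hs : #s < Fintype.card κ) (σ : ι → κ) :
    ∃ b, ∀ a' ∈ s, Disjoint (F a b) (F a' (σ a')) := by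
  classical
  set blocked := s.biUnion fun a' => univ.filter fun b => ¬Disjoint (F a b) (F a' (σ a'))
  have hcard : #blocked < #(univ : Finset κ) := by
    refine lt_of_le_of_lt ?_ (by simpa using hs)
    simpa using card_biUnion_le_card_mul s _ 1 fun a' ha' =>
      card_le_one.2 fun b₁ h₁ b₂ h₂ =>
        hblock a a' (ne_of_mem_of_not_mem ha' ha).symm (σ a')
          (mem_filter.1 h₁).2 (mem_filter.1 h₂).2
  obtain ⟨b, -, hb⟩ := exists_mem_notMem_of_card_lt_card hcard
  refine ⟨b, fun a' ha' => ?_⟩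
  by_contra h
  exact hb (mem_biUnion.2 ⟨a', ha', mem_filter.2 ⟨mem_univ b, h⟩⟩)

theorem exists_pairwise_disjoint_of_card_le [Fintype ι] (F : ι → κ → Finset α)
    (hcard : Fintype.card ι ≤ Fintype.card κ)
    (hblock : ∀ a a', a ≠ a' → ∀ c, {b | ¬Disjoint (F a b) (F a' c)}.Subsingleton) :
    ∃ σ : ι → κ, Pairwise fun a a' => Disjoint (F a (σ a)) (F a' (σ a')) := by
  classical
  obtain ⟨σ₀⟩ := Function.Embedding.nonempty_of_card_le hcard
  suffices ∀ s : Finset ι, ∃ σ : ι → κ,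
      (s : Set ι).Pairwise fun a a' => Disjoint (F a (σ a)) (F a' (σ a')) by
    obtain ⟨σ, hσ⟩ := this univ
    exact ⟨σ, by simpa [Set.pairwise_univ] using hσ⟩
  intro s
  induction s using Finset.induction_on with
  | empty => exact ⟨σ₀, by simp⟩
  | insert a s ha ih =>
    obtain ⟨σ, hσ⟩ := ih
    obtain ⟨b, hb⟩ := exists_forall_disjoint_of_card_lt F hblock ha
      ((card_lt_univ_of_notMem ha).trans_le hcard) σ
    have hσs : ∀ a' ∈ s, Function.update σ a b a' = σ a' := fun a' ha' =>
      Function.update_of_ne (ne_of_mem_of_not_mem ha' ha) b σ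
    refine ⟨Function.update σ a b, ?_⟩
    rw [coe_insert, Set.pairwise_insert]
    refine ⟨fun x hx y hy hxy => ?_, fun a' ha' _ => ?_⟩
    · simp only [hσs x hx, hσs y hy]
      exact hσ hx hy hxy
    · simp only [Function.update_self, hσs a' ha']
      exact ⟨hb a' ha', (hb a' ha').symm⟩

end GreedyChoice

theorem subsingleton_not_disjoint {ι κ α : Type*} (R : ι → κ → Finset α)
    (hdisj : ∀ i, ∀ a b, a ≠ b → Disjoint (R i a) (R i b))
    (hcross : ∀ i j, i ≠ j → ∀ a b1 b2,
      ¬Disjoint (R i a) (R j b1) → ¬Disjoint (R i a) (R j b2) → b1 = b2)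
    (i j : ι) (c : κ) : {b | ¬Disjoint (R i b) (R j c)}.Subsingleton := by
  intro b₁ h₁ b₂ h₂
  by_cases hij : j = i
  · subst hij
    have eq_c : ∀ b, ¬Disjoint (R j b) (R j c) → b = c := fun b h => by
      by_contra hb
      exact h (hdisj j b c hb)
    rw [eq_c b₁ h₁, eq_c b₂ h₂]
  · exact hcross j i hij c b₁ b₂ (fun h => h₁ h.symm) (fun h => h₂ h.symm)

theorem stmt14_general {N n r k : ℕ}
    (E : (Fin n → ZMod 2) →ₗ[ZMod 2] (Fin N → ZMod 2))
    (R : Fin n → Fin k → Finset (Fin N))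
    (hrec : ∀ i a, ∀ x x' : Fin n → ZMod 2, (∀ c ∈ R i a, E x c = E x' c) → x i = x' i)
    (hsize : ∀ i a, (R i a).card ≤ r)
    (hdisj : ∀ i, ∀ a b, a ≠ b → Disjoint (R i a) (R i b))
    (hcross : ∀ i j, i ≠ j → ∀ a b1 b2,
      ¬Disjoint (R i a) (R j b1) → ¬Disjoint (R i a) (R j b2) → b1 = b2) :
    ∀ req : Fin k → Fin n,
      ∃ T : Fin k → Finset (Fin N),
        (∀ a b, a ≠ b → Disjoint (T a) (T b)) ∧
        ∀ a, (T a).card ≤ r ∧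
          ∀ x x' : Fin n → ZMod 2, (∀ c ∈ T a, E x c = E x' c) → x (req a) = x' (req a) := by
  intro req
  obtain ⟨σ, hσ⟩ := exists_pairwise_disjoint_of_card_le (fun a => R (req a)) le_rfl
    fun a a' _ c => subsingleton_not_disjoint R hdisj hcross (req a) (req a') c
  exact ⟨fun a => R (req a) (σ a), fun _ _ hab => hσ hab,
    fun a => ⟨hsize (req a) (σ a), hrec (req a) (σ a)⟩⟩

/-- Let `C` be a binary systematic `[N,n]` code with, for every information
coordinate `i`, a fixed family of `k` pairwise disjoint recovering sets of size at most `r`,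
such that each recovering set of coordinate `i` intersects at most one recovering set of any
other coordinate `j`.  Then `C` is an `(r,k)`-batch code: every multiset request of `k`
information coordinates can be answered by pairwise disjoint recovering sets of size at
most `r`. -/
theorem stmt14 {N n r k : ℕ} (hr : 0 < r) (hk : 0 < k) (hn : n ≤ N)
    (E : (Fin n → ZMod 2) →ₗ[ZMod 2] (Fin N → ZMod 2))
    (hinj : Function.Injective E)
    (hsys : ∀ (x : Fin n → ZMod 2) (i : Fin n), E x (Fin.castLE hn i) = x i)
    (R : Fin n → Fin k → Finset (Fin N))
    (hrec : ∀ i a, ∀ x x' : Fin n → ZMod 2, (∀ c ∈ R i a, E x c = E x' c) → x i = x' i)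
    (hsize : ∀ i a, (R i a).card ≤ r)
    (hdisj : ∀ i, ∀ a b, a ≠ b → Disjoint (R i a) (R i b))
    (hcross : ∀ i j, i ≠ j → ∀ a b1 b2,
      ¬Disjoint (R i a) (R j b1) → ¬Disjoint (R i a) (R j b2) → b1 = b2) :
    ∀ req : Fin k → Fin n,
      ∃ T : Fin k → Finset (Fin N),
        (∀ a b, a ≠ b → Disjoint (T a) (T b)) ∧
        ∀ a, (T a).card ≤ r ∧
          ∀ x x' : Fin n → ZMod 2, (∀ c ∈ T a, E x c = E x' c) → x (req a) = x' (req a) :=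
  stmt14_general E R hrec hsize hdisj hcross
end

section
/- Let p be a prime, r a positive integer with r ≤ p, and S ⊆ [p] a set of size k. If S contains no r-weighted arithmetic progression modulo p, then the array code C(r,p,S) is a binary (r,k)-batch code of dimension rp (and length rp + kp): for every multiset {i_1,…,i_k} of information coordinates there exist pairwise disjoint recovering sets R_1,…,R_k, each of size at most r, with R_j a recovering set for i_j. -/
def NoWeightedAP (r p : ℕ) (S : Set ℕ) : Prop :=
  ¬ ∃ s1 ∈ S, ∃ s2 ∈ S, ∃ s3 ∈ S, ∃ x y : ℕ,
      s1 ≠ s2 ∧ s1 ≠ s3 ∧ s2 ≠ s3 ∧ 0 < x ∧ 0 < y ∧ x + y ≤ r - 1 ∧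
      (x * s1 + y * s2) % p = ((x + y) * s3) % p

section Geometry

variable {r p : ℕ}

/-- The `t` with `w ∈ D_{s,t}`, read in `ZMod p`. -/
def intercept (s : ℕ) (w : Fin r × Fin p) : ZMod p :=
  (w.2 : ℕ) - (w.1 : ℕ) * s

theorem natCast_ne_natCast_of_injective {k : ℕ} {S : Fin k → ℕ} (hSinj : Function.Injective S)
    (hSlt : ∀ ℓ, S ℓ < p) {ℓ m : Fin k} (h : ℓ ≠ m) : (S ℓ : ZMod p) ≠ S m :=
  fun h' => h (hSinj (CharP.natCast_injOn_Iio (ZMod p) p (hSlt ℓ) (hSlt m) h'))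

theorem mem_diag_iff [NeZero p] (s : ℕ) (t : ZMod p) (w : Fin r × Fin p) :
    ((w.1 : ℕ), (w.2 : ℕ)) ∈ diag r p s t.val ↔ intercept s w = t := by
  have key : (t.val + (w.1 : ℕ) * s) % p = w.2 ↔ intercept s w = t := by
    rw [← Nat.mod_eq_of_lt w.2.2, ← ZMod.natCast_eq_natCast_iff', intercept,
      sub_eq_iff_eq_add]
    push_cast [ZMod.natCast_zmod_val]
    exact eq_comm
  simp only [diag, Finset.mem_image, Finset.mem_range, Prod.mk.injEq]
  constructor
  · rintro ⟨i, -, rfl, h⟩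
    exact key.1 h
  · exact fun h => ⟨w.1, w.1.2, rfl, key.2 h⟩

theorem eq_of_intercept_eq_of_fst_eq {s : ℕ} {w w' : Fin r × Fin p}
    (h : intercept s w = intercept s w') (h1 : w.1 = w'.1) : w = w' := by
  rw [intercept, intercept, h1, sub_left_inj] at h
  exact Prod.ext h1 (Fin.ext (CharP.natCast_injOn_Iio (ZMod p) p w.2.2 w'.2.2 h))

theorem eq_of_intercept_eq_of_intercept_eq (hp : p.Prime) (hrp : r ≤ p) {s s' : ℕ}
    (hs : (s : ZMod p) ≠ s') {w w' : Fin r × Fin p}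
    (h : intercept s w = intercept s w') (h' : intercept s' w = intercept s' w') : w = w' := by
  have : Fact p.Prime := ⟨hp⟩
  have key : (((w.1 : ℕ) : ZMod p) - (w'.1 : ℕ)) * ((s : ZMod p) - s') = 0 := by
    unfold intercept at h h'
    linear_combination h' - h
  have hrow : ((w.1 : ℕ) : ZMod p) = (w'.1 : ℕ) :=
    sub_eq_zero.1 ((mul_eq_zero.1 key).resolve_right (sub_ne_zero.2 hs))
  exact eq_of_intercept_eq_of_fst_eq h
    (Fin.ext (CharP.natCast_injOn_Iio (ZMod p) p (w.1.2.trans_le hrp) (w'.1.2.trans_le hrp) hrow))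

namespace NoWeightedAP

variable {T : Set ℕ}

theorem false_of_fst_lt (hT : NoWeightedAP r p T) {sAB sBC sAC : ℕ} (hAB : sAB ∈ T)
    (hBC : sBC ∈ T) (hAC : sAC ∈ T) (h₁ : sAB ≠ sBC) (h₂ : sAB ≠ sAC) (h₃ : sBC ≠ sAC)
    {A B C : Fin r × Fin p} (hlt₁ : A.1 < B.1) (hlt₂ : B.1 < C.1)
    (lineAB : intercept sAB A = intercept sAB B) (lineBC : intercept sBC B = intercept sBC C)
    (lineAC : intercept sAC A = intercept sAC C) : False := by
  refine hT ⟨sAB, hAB, sBC, hBC, sAC, hAC, B.1 - A.1, C.1 - B.1, h₁, h₂, h₃, by omega, by omega,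
    by omega, (ZMod.natCast_eq_natCast_iff' _ _ _).1 ?_⟩
  unfold intercept at lineAB lineBC lineAC
  push_cast [Nat.cast_sub hlt₁.le, Nat.cast_sub hlt₂.le]
  linear_combination lineAB + lineBC - lineAC

theorem false_of_triangle (hT : NoWeightedAP r p T) {sAB sBC sAC : ℕ} (hAB : sAB ∈ T)
    (hBC : sBC ∈ T) (hAC : sAC ∈ T) (h₁ : sAB ≠ sBC) (h₂ : sAB ≠ sAC) (h₃ : sBC ≠ sAC)
    {A B C : Fin r × Fin p} (hA : A ≠ B) (hB : B ≠ C) (hC : A ≠ C)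
    (lineAB : intercept sAB A = intercept sAB B) (lineBC : intercept sBC B = intercept sBC C)
    (lineAC : intercept sAC A = intercept sAC C) : False := by
  wlog hlt : A.1 < B.1 generalizing A B sBC sAC
  · have hne : B.1 ≠ A.1 := fun h => hA (eq_of_intercept_eq_of_fst_eq lineAB h.symm)
    exact this hAC hBC h₂ h₁ h₃.symm hA.symm hC hB lineAB.symm lineAC lineBC
      (lt_of_le_of_ne (not_lt.1 hlt) hne)
  have hBC' : B.1 ≠ C.1 := fun h => hB (eq_of_intercept_eq_of_fst_eq lineBC h)
  have hAC' : A.1 ≠ C.1 := fun h => hC (eq_of_intercept_eq_of_fst_eq lineAC h)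
  rcases lt_or_gt_of_ne hBC' with hBC' | hCB
  · exact hT.false_of_fst_lt hAB hBC hAC h₁ h₂ h₃ hlt hBC' lineAB lineBC lineAC
  rcases lt_or_gt_of_ne hAC' with hAC' | hCA
  · exact hT.false_of_fst_lt hAC hBC hAB h₃.symm h₂.symm h₁.symm hAC' hCB lineAC lineBC.symm lineAB
  · exact hT.false_of_fst_lt hAC hAB hBC h₂.symm h₃.symm h₁ hCA hlt lineAC.symm lineAB lineBC.symm

end NoWeightedAP

end Geometry

open Finset

section Greedy

variable {ι κ α : Type*} [Fintype ι] [Fintype κ] {P : ι → Prop} {R : ι → κ → Finset α}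

theorem exists_forall_ne_disjoint (hcard : Fintype.card ι ≤ Fintype.card κ)
    (hflex : ∀ a b, a ≠ b → P a → ∀ m, {ℓ | ¬Disjoint (R a ℓ) (R b m)}.Subsingleton)
    {a : ι} (ha : P a) (σ : ι → κ) : ∃ ℓ, ∀ b, b ≠ a → Disjoint (R a ℓ) (R b (σ b)) := by
  classical
  let blocked := (univ.erase a).biUnion fun b => univ.filter fun ℓ => ¬Disjoint (R a ℓ) (R b (σ b))
  have hblocked : #blocked < Fintype.card κ :=
    calc #blocked ≤ ∑ b ∈ univ.erase a, 1 := by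
          refine card_biUnion_le.trans (sum_le_sum fun b hb => card_le_one.2 fun ℓ hℓ ℓ' hℓ' => ?_)
          simp only [mem_filter, mem_univ, true_and] at hℓ hℓ'
          exact hflex a b (ne_of_mem_erase hb).symm ha _ hℓ hℓ'
      _ < Fintype.card ι := by simp [card_erase_of_mem, Fintype.card_pos_iff.2 ⟨a⟩]
      _ ≤ Fintype.card κ := hcard
  obtain ⟨ℓ, -, hℓ⟩ := exists_mem_notMem_of_card_lt_card hblocked
  refine ⟨ℓ, fun b hb => ?_⟩
  by_contra h
  exact hℓ (mem_biUnion.2 ⟨b, mem_erase.2 ⟨hb, mem_univ b⟩, by simpa using h⟩)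

theorem exists_pairwise_disjoint_of_subsingleton_conflicts
    (hcard : Fintype.card ι ≤ Fintype.card κ)
    (hrigid : ∀ a b, a ≠ b → ¬P a → ¬P b → ∀ ℓ m, Disjoint (R a ℓ) (R b m))
    (hflex : ∀ a b, a ≠ b → P a → ∀ m, {ℓ | ¬Disjoint (R a ℓ) (R b m)}.Subsingleton) :
    ∃ σ : ι → κ, Pairwise fun a b => Disjoint (R a (σ a)) (R b (σ b)) := by
  classical
  obtain ⟨σ₀⟩ : Nonempty (ι → κ) := by
    rcases isEmpty_or_nonempty ι with _ | ⟨⟨a⟩⟩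
    · infer_instance
    · have : Nonempty κ := Fintype.card_pos_iff.1 ((Fintype.card_pos_iff.2 ⟨a⟩).trans_le hcard)
      infer_instance
  suffices ∀ s : Finset ι, ∃ σ : ι → κ, ∀ a b, a ≠ b → (a ∈ s ∨ ¬P a) → (b ∈ s ∨ ¬P b) →
      Disjoint (R a (σ a)) (R b (σ b)) by
    obtain ⟨σ, hσ⟩ := this univ
    exact ⟨σ, fun a b hab => hσ a b hab (.inl (mem_univ a)) (.inl (mem_univ b))⟩
  intro s
  induction s using Finset.induction_on with
  | empty =>
    refine ⟨σ₀, fun a b hab ha hb => ?_⟩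
    simp only [notMem_empty, false_or] at ha hb
    exact hrigid a b hab ha hb _ _
  | @insert a s _ ih =>
    obtain ⟨σ, hσ⟩ := ih
    by_cases hPa : ¬P a
    · exact ⟨σ, fun x y hxy hx hy => hσ x y hxy (by grind) (by grind)⟩
    obtain ⟨ℓ, hℓ⟩ := exists_forall_ne_disjoint hcard hflex (not_not.1 hPa) σ
    refine ⟨Function.update σ a ℓ, fun x y hxy hx hy => ?_⟩
    rcases eq_or_ne x a with rfl | hxa
    · simpa [Function.update_of_ne hxy.symm] using hℓ y hxy.symm
    rcases eq_or_ne y a with rfl | hya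
    · simpa [Function.update_of_ne hxy] using (hℓ x hxa).symm
    simp only [Function.update_of_ne hxa, Function.update_of_ne hya]
    exact hσ x y hxy (by grind) (by grind)

end Greedy

section ArrayCode

variable {r p k : ℕ} (S : Fin k → ℕ) [NeZero p]

/-- The index `(ℓ, t)` of the parity bit `ρ_{ℓ,t}` whose diagonal `D_{S ℓ, t}` contains `v`. -/
def diagIndex (ℓ : Fin k) (v : Fin r × Fin p) : Fin k × Fin p :=
  (ℓ, ⟨(intercept (S ℓ) v).val, ZMod.val_lt _⟩)

def lineSet (v : Fin r × Fin p) (ℓ : Fin k) : Finset ((Fin r × Fin p) ⊕ (Fin k × Fin p)) :=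
  insert (.inr (diagIndex S ℓ v))
    ((univ.filter fun w => w ≠ v ∧ intercept (S ℓ) w = intercept (S ℓ) v).map
      Function.Embedding.inl)

variable {S}

@[simp]
theorem inl_mem_lineSet {v w : Fin r × Fin p} {ℓ : Fin k} :
    .inl w ∈ lineSet S v ℓ ↔ w ≠ v ∧ intercept (S ℓ) w = intercept (S ℓ) v := by
  simp [lineSet]

@[simp]
theorem inr_mem_lineSet {v : Fin r × Fin p} {ℓ : Fin k} {i : Fin k × Fin p} :
    .inr i ∈ lineSet S v ℓ ↔ i = diagIndex S ℓ v := by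
  simp [lineSet]

theorem diagIndex_eq_diagIndex {ℓ m : Fin k} {v w : Fin r × Fin p} :
    diagIndex S ℓ v = diagIndex S m w ↔ ℓ = m ∧ intercept (S ℓ) v = intercept (S m) w := by
  simp [diagIndex, Fin.ext_iff, ZMod.val_injective p |>.eq_iff]

theorem arrayEncode_diagIndex (x : Fin r × Fin p → ZMod 2) (ℓ : Fin k) (v : Fin r × Fin p) :
    arrayEncode r p k S x (.inr (diagIndex S ℓ v)) =
      ∑ w ∈ univ.filter fun w => intercept (S ℓ) w = intercept (S ℓ) v, x w := by
  simp only [arrayEncode, diagIndex, mem_diag_iff]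

theorem card_lineSet_le (v : Fin r × Fin p) (ℓ : Fin k) : #(lineSet S v ℓ) ≤ r := by
  let line := univ.filter fun w : Fin r × Fin p => intercept (S ℓ) w = intercept (S ℓ) v
  have hline : #line ≤ r := by
    simpa using card_le_card_of_injOn (t := univ) Prod.fst (fun _ _ => mem_coe.2 (mem_univ _))
      fun w hw w' hw' h => eq_of_intercept_eq_of_fst_eq
        ((mem_filter.1 hw).2.trans (mem_filter.1 hw').2.symm) h
  have hv : v ∈ line := by simp [line]
  have herase : univ.filter (fun w => w ≠ v ∧ intercept (S ℓ) w = intercept (S ℓ) v) =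
      line.erase v := by
    ext; simp [line]
  calc #(lineSet S v ℓ) ≤ #(line.erase v) + 1 := by
        rw [← herase]; exact (card_insert_le _ _).trans_eq (by rw [card_map])
    _ = #line := card_erase_add_one hv
    _ ≤ r := hline

theorem eq_of_forall_mem_lineSet {v : Fin r × Fin p} {ℓ : Fin k} {x x' : Fin r × Fin p → ZMod 2}
    (h : ∀ c ∈ lineSet S v ℓ, arrayEncode r p k S x c = arrayEncode r p k S x' c) :
    x v = x' v := by
  let line := univ.filter fun w : Fin r × Fin p => intercept (S ℓ) w = intercept (S ℓ) v
  have hv : v ∈ line := by simp [line]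
  have hparity : ∑ w ∈ line, x w = ∑ w ∈ line, x' w := by
    simpa only [arrayEncode_diagIndex] using h (.inr (diagIndex S ℓ v)) (by simp)
  have hcells : ∑ w ∈ line.erase v, x w = ∑ w ∈ line.erase v, x' w :=
    sum_congr rfl fun w hw => h (.inl w) (by simpa [line, and_comm] using hw)
  rw [← add_sum_erase line x hv, ← add_sum_erase line x' hv, hcells] at hparity
  exact add_right_cancel hparity

theorem exists_of_not_disjoint_lineSet {v w : Fin r × Fin p} {ℓ m : Fin k}
    (h : ¬Disjoint (lineSet S v ℓ) (lineSet S w m)) :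
    (ℓ = m ∧ intercept (S m) v = intercept (S m) w) ∨
      ∃ u, u ≠ v ∧ intercept (S ℓ) u = intercept (S ℓ) v ∧
        intercept (S m) u = intercept (S m) w := by
  obtain ⟨c, hv, hw⟩ := not_disjoint_iff.1 h
  rcases c with u | i
  · rw [inl_mem_lineSet] at hv hw
    exact .inr ⟨u, hv.1, hv.2, hw.2⟩
  · rw [inr_mem_lineSet] at hv hw
    rw [hv, diagIndex_eq_diagIndex] at hw
    obtain ⟨rfl, h⟩ := hw
    exact .inl ⟨rfl, h⟩

theorem intercept_eq_of_not_disjoint_lineSet {v w : Fin r × Fin p} {m : Fin k}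
    (h : ¬Disjoint (lineSet S v m) (lineSet S w m)) :
    intercept (S m) v = intercept (S m) w := by
  obtain ⟨-, h⟩ | ⟨u, -, hv, hw⟩ := exists_of_not_disjoint_lineSet h
  exacts [h, hv.symm.trans hw]

theorem subsingleton_setOf_inl_mem_lineSet (hp : p.Prime) (hrp : r ≤ p)
    (hSinj : Function.Injective S) (hSlt : ∀ ℓ, S ℓ < p) (v w : Fin r × Fin p) :
    {ℓ | .inl w ∈ lineSet S v ℓ}.Subsingleton := by
  intro ℓ hℓ m hm
  simp only [Set.mem_ofPred_eq, inl_mem_lineSet] at hℓ hm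
  by_contra hne
  exact hℓ.1 (eq_of_intercept_eq_of_intercept_eq hp hrp
    (natCast_ne_natCast_of_injective hSinj hSlt hne) hℓ.2 hm.2)

theorem subsingleton_setOf_not_disjoint_lineSet (hp : p.Prime) (hrp : r ≤ p)
    (hSinj : Function.Injective S) (hSlt : ∀ ℓ, S ℓ < p) (hAP : NoWeightedAP r p (Set.range S))
    (v w : Fin r × Fin p) (m : Fin k) :
    {ℓ | ¬Disjoint (lineSet S v ℓ) (lineSet S w m)}.Subsingleton := by
  have cross : ∀ {ℓ ℓ'} {u : Fin r × Fin p}, ℓ ≠ ℓ' →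
      intercept (S ℓ) u = intercept (S ℓ) v → intercept (S ℓ') u = intercept (S ℓ') v → u = v :=
    fun hne => eq_of_intercept_eq_of_intercept_eq hp hrp
      (natCast_ne_natCast_of_injective hSinj hSlt hne)
  intro ℓ₁ h₁ ℓ₂ h₂
  by_contra h₁₂
  wlog h₁m : ℓ₁ ≠ m generalizing ℓ₁ ℓ₂
  · exact this h₂ h₁ (Ne.symm h₁₂) (by rintro rfl; exact h₁₂ (not_not.1 h₁m))
  obtain ⟨u₁, hu₁v, hu₁ℓ, hu₁m⟩ :=
    (exists_of_not_disjoint_lineSet h₁).resolve_left fun h => h₁m h.1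
  by_cases h₂m : ℓ₂ = m
  · subst h₂m
    -- `v` then lies on the diagonal of slope `S ℓ₂` through `w`, which `u₁` also meets
    exact hu₁v (cross h₁m hu₁ℓ (hu₁m.trans (intercept_eq_of_not_disjoint_lineSet h₂).symm))
  obtain ⟨u₂, hu₂v, hu₂ℓ, hu₂m⟩ :=
    (exists_of_not_disjoint_lineSet h₂).resolve_left fun h => h₂m h.1
  have hu : u₁ ≠ u₂ := by
    rintro rfl
    exact hu₁v (cross h₁₂ hu₁ℓ hu₂ℓ)
  exact hAP.false_of_triangle ⟨ℓ₁, rfl⟩ ⟨m, rfl⟩ ⟨ℓ₂, rfl⟩ (hSinj.ne h₁m) (hSinj.ne h₁₂)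
    (hSinj.ne (fun h => h₂m h.symm)) hu₁v.symm hu hu₂v.symm hu₁ℓ.symm (hu₁m.trans hu₂m.symm)
    hu₂ℓ.symm

end ArrayCode

section Requests

variable {r p k : ℕ}

def IsRepeat {α : Type*} (req : Fin k → α) (a : Fin k) : Prop :=
  ∃ b < a, req b = req a

theorem eq_of_not_isRepeat {α : Type*} {req : Fin k → α} {a b : Fin k} (ha : ¬IsRepeat req a)
    (hb : ¬IsRepeat req b) (h : req a = req b) : a = b := by
  rcases lt_trichotomy a b with hab | hab | hab
  exacts [absurd ⟨a, hab, h⟩ hb, hab, absurd ⟨b, hab, h.symm⟩ ha]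

noncomputable def recoverySet [NeZero p] (S : Fin k → ℕ) (req : Fin k → Fin r × Fin p)
    (a ℓ : Fin k) : Finset ((Fin r × Fin p) ⊕ (Fin k × Fin p)) :=
  open Classical in
  if IsRepeat req a then lineSet S (req a) ℓ else {.inl (req a)}

variable [NeZero p] {S : Fin k → ℕ} {req : Fin k → Fin r × Fin p}

theorem card_recoverySet_le (hr : 0 < r) (a ℓ : Fin k) : #(recoverySet S req a ℓ) ≤ r := by
  unfold recoverySet
  split_ifs
  exacts [card_lineSet_le _ _, hr]

theorem eq_of_forall_mem_recoverySet {a ℓ : Fin k} {x x' : Fin r × Fin p → ZMod 2}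
    (h : ∀ c ∈ recoverySet S req a ℓ, arrayEncode r p k S x c = arrayEncode r p k S x' c) :
    x (req a) = x' (req a) := by
  unfold recoverySet at h
  split_ifs at h
  exacts [eq_of_forall_mem_lineSet h, h _ (mem_singleton_self _)]

theorem disjoint_recoverySet_of_not_isRepeat {a b : Fin k} (hab : a ≠ b) (ha : ¬IsRepeat req a)
    (hb : ¬IsRepeat req b) (ℓ m : Fin k) :
    Disjoint (recoverySet S req a ℓ) (recoverySet S req b m) := by
  simp only [recoverySet, ha, hb, if_false, disjoint_singleton, ne_eq, Sum.inl.injEq]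
  exact fun h => hab (eq_of_not_isRepeat ha hb h)

theorem subsingleton_setOf_not_disjoint_recoverySet (hp : p.Prime) (hrp : r ≤ p)
    (hSinj : Function.Injective S) (hSlt : ∀ ℓ, S ℓ < p) (hAP : NoWeightedAP r p (Set.range S))
    {a b : Fin k} (ha : IsRepeat req a) (m : Fin k) :
    {ℓ | ¬Disjoint (recoverySet S req a ℓ) (recoverySet S req b m)}.Subsingleton := by
  by_cases hb : IsRepeat req b
  · simpa only [recoverySet, ha, hb, if_true] using
      subsingleton_setOf_not_disjoint_lineSet hp hrp hSinj hSlt hAP (req a) (req b) m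
  · simpa only [recoverySet, ha, hb, if_true, if_false, disjoint_singleton_right, not_not] using
      subsingleton_setOf_inl_mem_lineSet hp hrp hSinj hSlt (req a) (req b)

end Requests

/-- Let `p` be prime, `0 < r ≤ p`, and `S` a set of `k` distinct slopes in
`[p]` (given by the injective enumeration `S : Fin k → ℕ`) containing no `r`-weighted
arithmetic progression modulo `p`.  Then the array code `C(r,p,S)` — of dimension `rp` and
length `rp + kp` — is a binary `(r,k)`-batch code: every multiset request of `k` information
coordinates can be answered by pairwise disjoint recovering sets of size at most `r`. -/
theorem stmt15 (p r k : ℕ) (hp : p.Prime) (hr : 0 < r) (hrp : r ≤ p)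
    (S : Fin k → ℕ) (hSinj : Function.Injective S) (hSlt : ∀ l, S l < p)
    (hAP : NoWeightedAP r p (Set.range S)) :
    ∀ req : Fin k → Fin r × Fin p,
      ∃ R : Fin k → Finset ((Fin r × Fin p) ⊕ (Fin k × Fin p)),
        (∀ a b, a ≠ b → Disjoint (R a) (R b)) ∧
        ∀ a, (R a).card ≤ r ∧
          ∀ x x' : Fin r × Fin p → ZMod 2,
            (∀ c ∈ R a, arrayEncode r p k S x c = arrayEncode r p k S x' c) →
            x (req a) = x' (req a) := by
  intro req
  have : NeZero p := ⟨hp.ne_zero⟩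
  obtain ⟨σ, hσ⟩ := exists_pairwise_disjoint_of_subsingleton_conflicts
    (P := IsRepeat req) (R := recoverySet S req) le_rfl
    (fun a b hab ha hb => disjoint_recoverySet_of_not_isRepeat hab ha hb)
    (fun a b _ ha => subsingleton_setOf_not_disjoint_recoverySet hp hrp hSinj hSlt hAP ha)
  exact ⟨fun a => recoverySet S req a (σ a), fun a b hab => hσ hab,
    fun a => ⟨card_recoverySet_le hr a (σ a), fun x x' => eq_of_forall_mem_recoverySet⟩⟩
end

section
/- Let r, k be positive integers and p a prime with p > 2k²r². Then there exists a set S ⊆ {0,1,…,p−1} of size k that contains no r-weighted arithmetic progression modulo p. -/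
open Finset

/-- Residues that are either in `S` or the unique solution `s` of
`x a + y b = (x + y) s` or of `x s + y a = (x + y) b` for some `a, b ∈ S` and `0 < x, y < r`. -/
def forbiddenResidues (p r : ℕ) (S : Finset ℕ) : Finset (ZMod p) :=
  let T := S ×ˢ S ×ˢ (Ico 1 r ×ˢ Ico 1 r)
  S.image (↑) ∪
    T.image (fun t => ((t.2.2.1 + t.2.2.2 : ZMod p))⁻¹ * (t.2.2.1 * t.1 + t.2.2.2 * t.2.1)) ∪
    T.image (fun t => (t.2.2.1 : ZMod p)⁻¹ * ((t.2.2.1 + t.2.2.2) * t.2.1 - t.2.2.2 * t.1))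

theorem card_forbiddenResidues_le (p r : ℕ) (S : Finset ℕ) :
    #(forbiddenResidues p r S) ≤ #S + 2 * (#S * r) ^ 2 := by
  set T := S ×ˢ S ×ˢ (Ico 1 r ×ˢ Ico 1 r)
  have hT : #T ≤ (#S * r) ^ 2 := by
    simp only [T, card_product, Nat.card_Ico]
    have : r - 1 ≤ r := Nat.sub_le r 1
    calc #S * (#S * ((r - 1) * (r - 1))) ≤ #S * (#S * (r * r)) := by gcongr
      _ = (#S * r) ^ 2 := by ring
  calc #(forbiddenResidues p r S) ≤ #S + #T + #T := by
        refine (card_union_le _ _).trans (add_le_add ((card_union_le _ _).trans ?_) card_image_le)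
        exact add_le_add card_image_le card_image_le
    _ ≤ #S + 2 * (#S * r) ^ 2 := by omega

theorem ZMod.natCast_ne_zero_of_pos_of_lt {p n : ℕ} (h0 : 0 < n) (hlt : n < p) :
    (n : ZMod p) ≠ 0 :=
  (ZMod.natCast_eq_zero_iff n p).not.2 (Nat.not_dvd_of_pos_of_lt h0 hlt)

variable {p r : ℕ} [Fact p.Prime]

theorem NoWeightedAP.insert_val {S : Finset ℕ} (hS : NoWeightedAP r p S) (hrp : r ≤ p)
    {s : ZMod p} (hs : s ∉ forbiddenResidues p r S) : NoWeightedAP r p ↑(insert s.val S) := by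
  rintro ⟨s1, h1, s2, h2, s3, h3, x, y, h12, h13, h23, hx, hy, hxy, hmod⟩
  have heq : (x : ZMod p) * s1 + y * s2 = (x + y) * s3 := by
    exact_mod_cast (ZMod.natCast_eq_natCast_iff' _ _ p).2 hmod
  have hx0 : (x : ZMod p) ≠ 0 := ZMod.natCast_ne_zero_of_pos_of_lt hx (by omega)
  have hy0 : (y : ZMod p) ≠ 0 := ZMod.natCast_ne_zero_of_pos_of_lt hy (by omega)
  have hxy0 : (x + y : ZMod p) ≠ 0 := by
    exact_mod_cast ZMod.natCast_ne_zero_of_pos_of_lt (p := p) (n := x + y) (by omega) (by omega)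
  have hxr : x ∈ Ico 1 r := mem_Ico.2 ⟨hx, by omega⟩
  have hyr : y ∈ Ico 1 r := mem_Ico.2 ⟨hy, by omega⟩
  simp only [coe_insert, Set.mem_insert_iff, mem_coe] at h1 h2 h3
  apply hs
  rcases h3 with rfl | h3
  · refine mem_union_left _ (mem_union_right _ (mem_image.2 ⟨(s1, s2, x, y), ?_, ?_⟩))
    · simp [h1.resolve_left h13, h2.resolve_left h23, hxr, hyr]
    · rw [ZMod.natCast_zmod_val] at heq
      rw [inv_mul_eq_iff_eq_mul₀ hxy0, ← heq]
  rcases h1 with rfl | h1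
  · refine mem_union_right _ (mem_image.2 ⟨(s2, s3, x, y), ?_, ?_⟩)
    · simp [h2.resolve_left h12.symm, h3, hxr, hyr]
    · rw [inv_mul_eq_iff_eq_mul₀ hx0]
      rw [ZMod.natCast_zmod_val] at heq
      linear_combination -heq
  rcases h2 with rfl | h2
  · refine mem_union_right _ (mem_image.2 ⟨(s1, s3, y, x), ?_, ?_⟩)
    · simp [h1, h3, hxr, hyr]
    · rw [ZMod.natCast_zmod_val] at heq
      rw [inv_mul_eq_iff_eq_mul₀ hy0]
      linear_combination -heq
  exact (hS ⟨s1, h1, s2, h2, s3, h3, x, y, h12, h13, h23, hx, hy, hxy, hmod⟩).elim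

variable (p r) in
theorem exists_noWeightedAP_card (hrp : r ≤ p) :
    ∀ m : ℕ, (∀ j < m, j + 2 * (j * r) ^ 2 < p) →
      ∃ S : Finset ℕ, #S = m ∧ (∀ x ∈ S, x < p) ∧ NoWeightedAP r p ↑S
  | 0, _ => ⟨∅, rfl, by simp, by simp [NoWeightedAP]⟩
  | m + 1, hroom => by
    obtain ⟨S, hcard, hlt, hS⟩ :=
      exists_noWeightedAP_card hrp m fun j hj => hroom j (Nat.lt_succ_of_lt hj)
    obtain ⟨s, -, hs⟩ : ∃ s, s ∈ (univ : Finset (ZMod p)) ∧ s ∉ forbiddenResidues p r S := by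
      refine exists_mem_notMem_of_card_lt_card ?_
      rw [card_univ, ZMod.card]
      exact (card_forbiddenResidues_le p r S).trans_lt (hcard ▸ hroom m m.lt_succ_self)
    have hsS : s.val ∉ S := fun h =>
      hs (mem_union_left _ (mem_union_left _ (mem_image.2 ⟨s.val, h, ZMod.natCast_zmod_val s⟩)))
    refine ⟨insert s.val S, by rw [card_insert_of_notMem hsS, hcard], ?_, hS.insert_val hrp hs⟩
    simpa only [mem_insert, forall_eq_or_imp] using ⟨s.val_lt, hlt⟩

/-- For `r, k ≥ 1` and a prime `p > 2k²r²`, there is a set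
`S ⊆ {0,1,…,p-1}` of size `k` containing no `r`-weighted arithmetic progression
modulo `p`. -/
theorem stmt16 (r k p : ℕ) (hr : 0 < r) (hk : 0 < k) (hp : p.Prime)
    (hbig : 2 * k ^ 2 * r ^ 2 < p) :
    ∃ S : Finset ℕ, S.card = k ∧ (∀ x ∈ S, x < p) ∧ NoWeightedAP r p ↑S := by
  have : Fact p.Prime := ⟨hp⟩
  have hrp : r ≤ p :=
    calc r ≤ r ^ 2 := Nat.le_self_pow two_ne_zero r
      _ ≤ 2 * k ^ 2 * r ^ 2 := Nat.le_mul_of_pos_left _ (by positivity)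
      _ ≤ p := hbig.le
  refine exists_noWeightedAP_card p r hrp k fun j hj => ?_
  have hr2 : 1 ≤ r ^ 2 := Nat.one_le_pow _ _ hr
  calc j + 2 * (j * r) ^ 2 < 2 * (j + 1) ^ 2 * r ^ 2 := by nlinarith
    _ ≤ 2 * k ^ 2 * r ^ 2 := by gcongr; exact hj
    _ < p := hbig
end
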